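/- arXiv:1109.0761 — 5 statements merged into one kernel-verified Lean document; each statement's English description precedes it below -/
import Mathlib

section
/- Let A be a ring with involution, n ≥ 0, and let (C, φ) and (C', φ') be n-dimensional symmetric Poincaré complexes of finitely generated projective left A-modules: collections φ_s: C^{n−r+s} → C_r and φ'_s: C'^{n−r+s} → C'_r (s ≥ 0) satisfying the symmetric-structure equations, with φ₀: C^{n−*} → C_* and φ'₀: C'^{n−*} → C'_* chain homotopy equivalences. Let f: C → C' be a chain homotopy equivalence with f ∘ φ_s ∘ f* = φ'_s for all s ≥ 0. Then ((f, 1): C ⊕ C' → C', (0, φ ⊕ −φ')) is an (n+1)-dimensional symmetric Poincaré pair: the relative symmetric-pair equations hold, and the chain map 𝒞((f,1))^{n+1−*} → C'_* with components (0, (f,1)∘(φ₀ ⊕ −φ'₀)) induces isomorphisms H^r(𝒞((f,1))) ≅ H_{n+1−r}(C') for all 0 ≤ r ≤ n+1. (This is the algebraic product cobordism.) -/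
namespace stmt11

universe u u' v

variable (A : Type v) [Ring A] [StarRing A]

/-- The dual `Hom_A(M, A)` of a left `A`-module over a ring with involution,
made into a left `A`-module using the involution: `(a·ξ)(x) = ξ(x)·(star a)`. -/
def Dual (M : Type u) [AddCommGroup M] [Module A M] : Type (max u v) := M →ₗ[A] A

instance (M : Type u) [AddCommGroup M] [Module A M] : AddCommGroup (Dual A M) :=
  inferInstanceAs (AddCommGroup (M →ₗ[A] A))

/-- The underlying `A`-linear map of an element of the dual. -/
def toL {M : Type u} [AddCommGroup M] [Module A M] (ξ : Dual A M) : M →ₗ[A] A := ξ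

/-- An `A`-linear map `M → A` as an element of the dual. -/
def ofL {M : Type u} [AddCommGroup M] [Module A M] (ξ : M →ₗ[A] A) : Dual A M := ξ

/-- Scalar multiplication on the dual: `(a·ξ)(x) = ξ(x)·(star a)`. -/
def dsmul {M : Type u} [AddCommGroup M] [Module A M] (a : A) (ξ : Dual A M) :
    Dual A M :=
  ofL A
  { toFun := fun x => toL A ξ x * star a
    map_add' := fun x y => by
      show toL A ξ (x + y) * star a = toL A ξ x * star a + toL A ξ y * star a
      rw [map_add, add_mul]
    map_smul' := fun c x => by
      show toL A ξ (c • x) * star a = c • (toL A ξ x * star a)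
      rw [map_smul, smul_eq_mul, smul_eq_mul, mul_assoc] }

instance (M : Type u) [AddCommGroup M] [Module A M] : Module A (Dual A M) where
  smul := dsmul A
  one_smul ξ := LinearMap.ext fun x => by
    show toL A ξ x * star 1 = toL A ξ x
    rw [star_one, mul_one]
  mul_smul a b ξ := LinearMap.ext fun x => by
    show toL A ξ x * star (a * b) = (toL A ξ x * star b) * star a
    rw [star_mul, mul_assoc]
  smul_zero a := LinearMap.ext fun x => by
    show toL A (0 : Dual A M) x * star a = toL A (0 : Dual A M) x
    show (0 : A) * star a = (0 : A)
    rw [zero_mul]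
  smul_add a ξ ζ := LinearMap.ext fun x => by
    show toL A (ξ + ζ) x * star a = _
    show (toL A ξ x + toL A ζ x) * star a
      = toL A ξ x * star a + toL A ζ x * star a
    rw [add_mul]
  add_smul a b ξ := LinearMap.ext fun x => by
    show toL A ξ x * star (a + b) = toL A ξ x * star a + toL A ξ x * star b
    rw [star_add, mul_add]
  zero_smul ξ := LinearMap.ext fun x => by
    show toL A ξ x * star 0 = (0 : A)
    rw [star_zero, mul_zero]

variable {A}

/-- The dual `f* = (ξ ↦ ξ ∘ f)` of an `A`-linear map (precomposition), which
is `A`-linear for the star-twisted module structures on the duals. -/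
def dualMap {M : Type u} {N : Type u'} [AddCommGroup M] [Module A M]
    [AddCommGroup N] [Module A N] (f : M →ₗ[A] N) :
    Dual A N →ₗ[A] Dual A M where
  toFun ξ := ofL A ((toL A ξ).comp f)
  map_add' ξ ζ := LinearMap.ext fun x => rfl
  map_smul' a ξ := LinearMap.ext fun x => rfl

variable (A)

/-- The canonical map `M → M**`, `x ↦ (ξ ↦ star (ξ x))`; it is bijective for
finitely generated projective `M`, giving the identification under which the
transposition `Tθ` of `θ ∈ Hom_A(C^p, C_q)` satisfies
`ev ∘ Tθ = (-1)^{pq}·(dual of θ)`. -/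
def evMap (M : Type u) [AddCommGroup M] [Module A M] :
    M →ₗ[A] Dual A (Dual A M) where
  toFun x := ofL A
    { toFun := fun ξ => star (toL A ξ x)
      map_add' := fun ξ ζ => by
        show star (toL A ξ x + toL A ζ x) = _
        rw [star_add]
      map_smul' := fun a ξ => by
        show star (toL A ξ x * star a) = a • star (toL A ξ x)
        rw [star_mul, star_star, smul_eq_mul] }
  map_add' x y := LinearMap.ext fun ξ => by
    show star (toL A ξ (x + y)) = star (toL A ξ x) + star (toL A ξ y)
    rw [map_add, star_add]
  map_smul' a x := LinearMap.ext fun ξ => by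
    show star (toL A ξ (a • x)) = star (toL A ξ x) * star a
    rw [map_smul, smul_eq_mul, star_mul]

/-- The algebraic mapping cone `𝒞((f,1) : C ⊕ C' → C')`,
`𝒞_r = C'_r ⊕ (C_{r-1} ⊕ C'_{r-1})`. -/
def Cone (C C' : ℕ → Type u) : ℕ → Type u
  | 0 => C' 0
  | (r + 1) => C' (r + 1) × (C r × C' r)

instance (C C' : ℕ → Type u) [∀ r, AddCommGroup (C r)]
    [∀ r, AddCommGroup (C' r)] : ∀ r, AddCommGroup (Cone C C' r)
  | 0 => inferInstanceAs (AddCommGroup (C' 0))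
  | (r + 1) => inferInstanceAs (AddCommGroup (C' (r + 1) × (C r × C' r)))

instance (C C' : ℕ → Type u) [∀ r, AddCommGroup (C r)]
    [∀ r, AddCommGroup (C' r)] [∀ r, Module A (C r)] [∀ r, Module A (C' r)] :
    ∀ r, Module A (Cone C C' r)
  | 0 => inferInstanceAs (Module A (C' 0))
  | (r + 1) => inferInstanceAs (Module A (C' (r + 1) × (C r × C' r)))

variable {A}

/-- The differential of the mapping cone of `(f,1) : C ⊕ C' → C'`:
on `𝒞_{r+1}`, `(y, (x, x')) ↦ (∂y + (-1)^r (f x + x'), (∂x, ∂x'))`. -/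
noncomputable def dCone (C C' : ℕ → Type u) [∀ r, AddCommGroup (C r)]
    [∀ r, AddCommGroup (C' r)] [∀ r, Module A (C r)] [∀ r, Module A (C' r)]
    (dC : ∀ r, C (r + 1) →ₗ[A] C r) (dC' : ∀ r, C' (r + 1) →ₗ[A] C' r)
    (f : ∀ r, C r →ₗ[A] C' r) :
    ∀ r, Cone C C' (r + 1) →ₗ[A] Cone C C' r
  | 0 =>
      dC' 0 ∘ₗ LinearMap.fst A (C' 1) (C 0 × C' 0)
        + (f 0 ∘ₗ LinearMap.fst A (C 0) (C' 0)
            + LinearMap.snd A (C 0) (C' 0)) ∘ₗ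
          LinearMap.snd A (C' 1) (C 0 × C' 0)
  | (r + 1) =>
      LinearMap.prod
        (dC' (r + 1) ∘ₗ LinearMap.fst A (C' (r + 2)) (C (r + 1) × C' (r + 1))
          + ((-1 : ℤ) ^ (r + 1)) •
            ((f (r + 1) ∘ₗ LinearMap.fst A (C (r + 1)) (C' (r + 1))
                + LinearMap.snd A (C (r + 1)) (C' (r + 1))) ∘ₗ
              LinearMap.snd A (C' (r + 2)) (C (r + 1) × C' (r + 1))))
        (LinearMap.prodMap (dC r) (dC' r) ∘ₗ
          LinearMap.snd A (C' (r + 2)) (C (r + 1) × C' (r + 1)))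

/-- The inclusion `C_r → 𝒞_{r+1}`, `x ↦ (0, (x, 0))`. -/
def inC (C C' : ℕ → Type u) [∀ r, AddCommGroup (C r)]
    [∀ r, AddCommGroup (C' r)] [∀ r, Module A (C r)] [∀ r, Module A (C' r)]
    (r : ℕ) : C r →ₗ[A] Cone C C' (r + 1) :=
  LinearMap.prod 0 (LinearMap.prod LinearMap.id 0)

/-- The inclusion `C'_r → 𝒞_{r+1}`, `x' ↦ (0, (0, x'))`. -/
def inC' (C C' : ℕ → Type u) [∀ r, AddCommGroup (C r)]
    [∀ r, AddCommGroup (C' r)] [∀ r, Module A (C r)] [∀ r, Module A (C' r)]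
    (r : ℕ) : C' r →ₗ[A] Cone C C' (r + 1) :=
  LinearMap.prod 0 (LinearMap.prod 0 LinearMap.id)

/-- The relative duality map `(0, (f,1)∘(φ₀ ⊕ -φ'₀)) : 𝒞^{n+1-*} → C'_*` of the
symmetric pair `((f,1) : C ⊕ C' → C', (0, φ ⊕ -φ'))`: on a cone degree
`rc = r+1`, `ξ ↦ f(φ₀(ξ ∘ ι_C)) - φ'₀(ξ ∘ ι_{C'})`. -/
noncomputable def Phi (C C' : ℕ → Type u) [∀ r, AddCommGroup (C r)]
    [∀ r, AddCommGroup (C' r)] [∀ r, Module A (C r)] [∀ r, Module A (C' r)]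
    (f : ∀ r, C r →ₗ[A] C' r)
    (φ : ∀ s r m : ℕ, Dual A (C m) →ₗ[A] C r)
    (φ' : ∀ s r m : ℕ, Dual A (C' m) →ₗ[A] C' r) :
    ∀ rc rt : ℕ, Dual A (Cone C C' rc) →ₗ[A] C' rt
  | 0, _ => 0
  | (r + 1), rt =>
      f rt ∘ₗ φ 0 rt r ∘ₗ dualMap (inC C C' r)
        - φ' 0 rt r ∘ₗ dualMap (inC' C C' r)

/-- The direct sum symmetric structure `φ ⊕ -φ'` on `C ⊕ C'`. -/
noncomputable def sumPhi (C C' : ℕ → Type u) [∀ r, AddCommGroup (C r)]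
    [∀ r, AddCommGroup (C' r)] [∀ r, Module A (C r)] [∀ r, Module A (C' r)]
    (φ : ∀ s r m : ℕ, Dual A (C m) →ₗ[A] C r)
    (φ' : ∀ s r m : ℕ, Dual A (C' m) →ₗ[A] C' r)
    (s r m : ℕ) : Dual A (C m × C' m) →ₗ[A] (C r × C' r) :=
  LinearMap.prod
    (φ s r m ∘ₗ dualMap (LinearMap.inl A (C m) (C' m)))
    (-(φ' s r m ∘ₗ dualMap (LinearMap.inr A (C m) (C' m))))

end stmt11

/-! The map `coneIncl : x ↦ (0, (x, -f x))` is a chain homotopy equivalence from `C` (shifted by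
one) to the mapping cone of `(f,1) : C ⊕ C' → C'`, and since `f φ₀ f* = φ'₀` the duality map
`Phi` factors as `f ∘ φ₀ ∘ coneIncl*`. A composite of three chain homotopy equivalences, `Phi`
induces isomorphisms in (co)homology: injectivity because each factor reflects boundaries among
cycles, surjectivity via the homotopy inverses `g`, `ψ` and `prC*`. The symmetric-pair equations
hold componentwise on `C ⊕ C'`, the relative term being `f φ_s f* - φ'_s = 0`. -/

namespace stmt11

universe u

section Dual

variable {A : Type*} [Ring A] {M N P : Type*} [AddCommGroup M] [Module A M]
  [AddCommGroup N] [Module A N] [AddCommGroup P] [Module A P]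

lemma Dual.ext {ξ ζ : Dual A M} (h : ∀ x, toL A ξ x = toL A ζ x) : ξ = ζ := LinearMap.ext h

lemma toL_prod_mk (ζ : Dual A (M × N)) (x : M) (y : N) :
    toL A ζ (x, y) = toL A ζ (LinearMap.inl A M N x) + toL A ζ (LinearMap.inr A M N y) := by
  rw [← map_add, LinearMap.inl_apply, LinearMap.inr_apply, Prod.mk_add_mk, add_zero, zero_add]

lemma Dual.eq_zero_of_subsingleton [Subsingleton M] (ξ : Dual A M) : ξ = 0 :=
  Dual.ext fun x => by rw [Subsingleton.elim x 0, map_zero, map_zero]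

@[simp] lemma toL_add (ξ ζ : Dual A M) (x : M) :
    toL A (ξ + ζ) x = toL A ξ x + toL A ζ x := rfl

@[simp] lemma toL_sub (ξ ζ : Dual A M) (x : M) :
    toL A (ξ - ζ) x = toL A ξ x - toL A ζ x := rfl

@[simp] lemma toL_zero (x : M) : toL A (0 : Dual A M) x = 0 := rfl

@[simp] lemma toL_zsmul (c : ℤ) (ξ : Dual A M) (x : M) :
    toL A (c • ξ) x = c • toL A ξ x := rfl

variable [StarRing A]

@[simp] lemma toL_dualMap (f : M →ₗ[A] N) (ξ : Dual A N) (x : M) :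
    toL A (dualMap f ξ) x = toL A ξ (f x) := rfl

@[simp] lemma toL_evMap (x : M) (ζ : Dual A M) :
    toL A (evMap A M x) ζ = star (toL A ζ x) := rfl

@[simp] lemma dualMap_zero (ξ : Dual A N) : dualMap (0 : M →ₗ[A] N) ξ = 0 :=
  Dual.ext fun _ => map_zero (toL A ξ)

@[simp] lemma dualMap_id (ξ : Dual A M) : dualMap LinearMap.id ξ = ξ := rfl

lemma dualMap_dualMap (f : M →ₗ[A] N) (g : N →ₗ[A] P) (ξ : Dual A P) :
    dualMap f (dualMap g ξ) = dualMap (g ∘ₗ f) ξ := rfl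

end Dual

lemma neg_one_pow_smul_smul {M : Type*} [AddCommGroup M] (k : ℕ) (x : M) :
    ((-1 : ℤ) ^ k) • ((-1 : ℤ) ^ k) • x = x := by
  rw [smul_smul, ← pow_add, Even.neg_one_pow ⟨k, rfl⟩, one_smul]

section Complex

variable {A : Type*} [Ring A] {C D : ℕ → Type*} [∀ r, AddCommGroup (C r)] [∀ r, Module A (C r)]
  [∀ r, AddCommGroup (D r)] [∀ r, Module A (D r)]
  (d : ∀ r, C (r + 1) →ₗ[A] C r) (d' : ∀ r, D (r + 1) →ₗ[A] D r)

def cycles : ∀ r, Submodule A (C r)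
  | 0 => ⊤
  | r + 1 => LinearMap.ker (d r)

def IsHomotopicToIdAt (h : ∀ r, C r →ₗ[A] C (r + 1)) : ∀ r, (C r →ₗ[A] C r) → Prop
  | 0, u => u - LinearMap.id = d 0 ∘ₗ h 0
  | r + 1, u => u - LinearMap.id = d (r + 1) ∘ₗ h (r + 1) + h r ∘ₗ d r

structure HomotopyInverse (f : ∀ r, C r →ₗ[A] D r) where
  g : ∀ r, D r →ₗ[A] C r
  h : ∀ r, C r →ₗ[A] C (r + 1)
  h' : ∀ r, D r →ₗ[A] D (r + 1)
  comm : ∀ r, d r ∘ₗ g (r + 1) = g r ∘ₗ d' r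
  gf : ∀ r, IsHomotopicToIdAt d h r (g r ∘ₗ f r)
  fg : ∀ r, IsHomotopicToIdAt d' h' r (f r ∘ₗ g r)

variable {d d'}

@[simp] lemma mem_cycles_succ {r : ℕ} {x : C (r + 1)} : x ∈ cycles d (r + 1) ↔ d r x = 0 :=
  Iff.rfl

lemma IsHomotopicToIdAt.apply_sub_eq {h : ∀ r, C r →ₗ[A] C (r + 1)} {r : ℕ} {u : C r →ₗ[A] C r}
    (hu : IsHomotopicToIdAt d h r u) {x : C r} (hx : x ∈ cycles d r) :
    u x - x = d r (h r x) := by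
  cases r with
  | zero => exact LinearMap.congr_fun hu x
  | succ r =>
    have := LinearMap.congr_fun hu x
    simp only [LinearMap.sub_apply, LinearMap.add_apply, LinearMap.comp_apply,
      LinearMap.id_apply, mem_cycles_succ.mp hx, map_zero, add_zero] at this
    exact this

lemma map_mem_cycles {u : ∀ r, C r →ₗ[A] D r} (hu : ∀ r, d' r ∘ₗ u (r + 1) = u r ∘ₗ d r)
    {r : ℕ} {x : C r} (hx : x ∈ cycles d r) : u r x ∈ cycles d' r := by
  cases r with
  | zero => trivial
  | succ r =>
    rw [mem_cycles_succ, ← LinearMap.comp_apply, hu, LinearMap.comp_apply,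
      mem_cycles_succ.mp hx, map_zero]

lemma HomotopyInverse.mem_range_of_map_mem_range {f : ∀ r, C r →ₗ[A] D r}
    (E : HomotopyInverse d d' f) {r : ℕ} {x : C r} (hx : x ∈ cycles d r)
    (hfx : f r x ∈ LinearMap.range (d' r)) : x ∈ LinearMap.range (d r) := by
  obtain ⟨z, hz⟩ := hfx
  have hgf := (E.gf r).apply_sub_eq hx
  rw [LinearMap.comp_apply, ← hz, ← LinearMap.comp_apply, ← E.comm,
    LinearMap.comp_apply] at hgf
  exact ⟨E.g (r + 1) z - E.h r x, by rw [map_sub, ← hgf, sub_sub_cancel]⟩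

end Complex

section Poincare

variable {A : Type*} [Ring A] [StarRing A]
  {C : ℕ → Type*} [∀ r, AddCommGroup (C r)] [∀ r, Module A (C r)]
  (d : ∀ r, C (r + 1) →ₗ[A] C r)

def coboundaries : ∀ m, Submodule A (Dual A (C m))
  | 0 => ⊥
  | m + 1 => LinearMap.range (dualMap (d m))

/-- A chain homotopy inverse `ψ : C_* → C^{n-*}` of `φ₀`, whose component `φ₀ r m` matters
only when `m + r = n`. -/
structure PoincareInverse (n : ℕ) (φ₀ : ∀ r m, Dual A (C m) →ₗ[A] C r) where
  ψ : ∀ r m, C r →ₗ[A] Dual A (C m)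
  hh : ∀ r, C r →ₗ[A] C (r + 1)
  kk : ∀ m, Dual A (C (m + 1)) →ₗ[A] Dual A (C m)
  comm : ∀ r m, m + r + 1 = n →
    ((-1 : ℤ) ^ (r + 1)) • (dualMap (d m) ∘ₗ ψ (r + 1) m) = ψ r (m + 1) ∘ₗ d r
  φψ : ∀ r m, m + r = n → IsHomotopicToIdAt d hh r (φ₀ r m ∘ₗ ψ r m)
  ψφ_zero : ψ n 0 ∘ₗ φ₀ n 0 - LinearMap.id = ((-1 : ℤ) ^ n) • (kk 0 ∘ₗ dualMap (d 0))
  ψφ_succ : ∀ r m, m + 1 + r = n →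
    ψ r (m + 1) ∘ₗ φ₀ r (m + 1) - LinearMap.id
      = ((-1 : ℤ) ^ (r + 1)) • (dualMap (d m) ∘ₗ kk m)
        + ((-1 : ℤ) ^ r) • (kk (m + 1) ∘ₗ dualMap (d (m + 1)))

variable {d} {n : ℕ} {φ₀ : ∀ r m, Dual A (C m) →ₗ[A] C r}

lemma apply_mem_cycles_of_dualMap_eq_zero
    (hφ₀ : ∀ r m, m + r + 1 = n →
      d r ∘ₗ φ₀ (r + 1) m + ((-1 : ℤ) ^ r) • (φ₀ r (m + 1) ∘ₗ dualMap (d m)) = 0)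
    {r m : ℕ} (hmr : m + r = n) {ζ : Dual A (C m)} (hζ : dualMap (d m) ζ = 0) :
    φ₀ r m ζ ∈ cycles d r := by
  cases r with
  | zero => trivial
  | succ r => simpa [hζ] using LinearMap.congr_fun (hφ₀ r m (by omega)) ζ

namespace PoincareInverse

variable (P : PoincareInverse d n φ₀)

lemma ψ_φ₀_sub_mem_coboundaries {r m : ℕ} (hmr : m + r = n) {ζ : Dual A (C m)}
    (hζ : dualMap (d m) ζ = 0) : P.ψ r m (φ₀ r m ζ) - ζ ∈ coboundaries d m := by
  cases m with
  | zero =>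
    obtain rfl : r = n := by omega
    simpa [coboundaries, hζ] using LinearMap.congr_fun P.ψφ_zero ζ
  | succ m =>
    have := LinearMap.congr_fun (P.ψφ_succ r m (by omega)) ζ
    simp only [LinearMap.sub_apply, LinearMap.add_apply, LinearMap.smul_apply,
      LinearMap.comp_apply, LinearMap.id_apply, hζ, map_zero, smul_zero, add_zero] at this
    exact ⟨((-1 : ℤ) ^ (r + 1)) • P.kk m ζ, by rw [this, map_zsmul]⟩

lemma ψ_d_mem_coboundaries [Subsingleton (C (n + 1))] {r m : ℕ} (hmr : m + r = n)
    (u : C (r + 1)) : P.ψ r m (d r u) ∈ coboundaries d m := by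
  cases m with
  | zero =>
    obtain rfl : r = n := by omega
    rw [Subsingleton.elim u 0, map_zero, map_zero]
    exact zero_mem _
  | succ m =>
    exact ⟨((-1 : ℤ) ^ (r + 1)) • P.ψ (r + 1) m u, by
      simpa using LinearMap.congr_fun (P.comm r m (by omega)) u⟩

lemma mem_coboundaries_of_mem_range (P : PoincareInverse d n φ₀) [Subsingleton (C (n + 1))]
    {r m : ℕ} (hmr : m + r = n)
    {ζ : Dual A (C m)} (hζ : dualMap (d m) ζ = 0) (h : φ₀ r m ζ ∈ LinearMap.range (d r)) :
    ζ ∈ coboundaries d m := by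
  obtain ⟨u, hu⟩ := h
  have h1 := P.ψ_φ₀_sub_mem_coboundaries hmr hζ
  rw [← hu] at h1
  simpa using sub_mem (P.ψ_d_mem_coboundaries hmr u) h1

lemma dualMap_d_ψ_eq_zero [Subsingleton (C (n + 1))] {r m : ℕ} (hmr : m + r = n)
    {w : C r} (hw : w ∈ cycles d r) : dualMap (d m) (P.ψ r m w) = 0 := by
  cases r with
  | zero =>
    obtain rfl : m = n := by omega
    exact Dual.eq_zero_of_subsingleton _
  | succ r =>
    have := LinearMap.congr_fun (P.comm r m (by omega)) w
    rw [LinearMap.comp_apply, mem_cycles_succ.mp hw, map_zero, LinearMap.smul_apply,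
      LinearMap.comp_apply] at this
    rw [← neg_one_pow_smul_smul (r + 1) (dualMap (d m) (P.ψ (r + 1) m w)), this, smul_zero]

end PoincareInverse

end Poincare

section Cone

variable {A : Type*} [Ring A] (C C' : ℕ → Type u) [∀ r, AddCommGroup (C r)]
  [∀ r, AddCommGroup (C' r)] [∀ r, Module A (C r)] [∀ r, Module A (C' r)]

def inD (r : ℕ) : C' (r + 1) →ₗ[A] Cone C C' (r + 1) :=
  LinearMap.prod LinearMap.id 0

def prD (r : ℕ) : Cone C C' (r + 1) →ₗ[A] C' (r + 1) :=
  LinearMap.fst A (C' (r + 1)) (C r × C' r)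

def prC (r : ℕ) : Cone C C' (r + 1) →ₗ[A] C r :=
  LinearMap.fst A (C r) (C' r) ∘ₗ LinearMap.snd A (C' (r + 1)) (C r × C' r)

def coneIncl (f : ∀ r, C r →ₗ[A] C' r) (r : ℕ) : C r →ₗ[A] Cone C C' (r + 1) :=
  LinearMap.prod 0 (LinearMap.prod LinearMap.id (-f r))

variable {C C'} {dC : ∀ r, C (r + 1) →ₗ[A] C r} {dC' : ∀ r, C' (r + 1) →ₗ[A] C' r}
  {f : ∀ r, C r →ₗ[A] C' r}

lemma dCone_comp_coneIncl_zero : dCone C C' dC dC' f 0 ∘ₗ coneIncl C C' f 0 = 0 :=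
  LinearMap.ext fun x => show dC' 0 0 + (f 0 x + -f 0 x) = 0 by simp

lemma dCone_comp_coneIncl_succ (hf : ∀ r, dC' r ∘ₗ f (r + 1) = f r ∘ₗ dC r) (r : ℕ) :
    dCone C C' dC dC' f (r + 1) ∘ₗ coneIncl C C' f (r + 1) = coneIncl C C' f r ∘ₗ dC r := by
  ext x
  show ((dC' (r + 1) 0 + ((-1 : ℤ) ^ (r + 1)) • (f (r + 1) x + -f (r + 1) x),
      (dC r x, dC' r (-f (r + 1) x))) : C' (r + 1) × (C r × C' r))
    = (0, (dC r x, -f r (dC r x)))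
  simp [← LinearMap.comp_apply (dC' r), hf]

lemma prC_comp_dCone (r : ℕ) :
    prC C C' r ∘ₗ dCone C C' dC dC' f (r + 1) = dC r ∘ₗ prC C C' (r + 1) := rfl

lemma prC_comp_coneIncl (r : ℕ) : prC (A := A) C C' r ∘ₗ coneIncl C C' f r = LinearMap.id := rfl

@[simp] lemma inC'_fst {r : ℕ} (x : C' r) : (inC' (A := A) C C' r x).1 = 0 := rfl

@[simp] lemma inC'_snd {r : ℕ} (x : C' r) : (inC' (A := A) C C' r x).2 = (0, x) := rfl

@[simp] lemma dCone_succ_fst {r : ℕ} (v : Cone C C' (r + 2)) :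
    (dCone C C' dC dC' f (r + 1) v).1
      = dC' (r + 1) v.1 + ((-1 : ℤ) ^ (r + 1)) • (f (r + 1) v.2.1 + v.2.2) := rfl

@[simp] lemma dCone_succ_snd {r : ℕ} (v : Cone C C' (r + 2)) :
    (dCone C C' dC dC' f (r + 1) v).2 = (dC r v.2.1, dC' r v.2.2) := rfl

variable [StarRing A]

lemma toL_cone {r : ℕ} (ξ : Dual A (Cone C C' (r + 1))) (v : Cone C C' (r + 1)) :
    toL A ξ v = toL A (dualMap (inD C C' r) ξ) v.1 + toL A (dualMap (inC C C' r) ξ) v.2.1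
      + toL A (dualMap (inC' C C' r) ξ) v.2.2 := by
  obtain ⟨y, x, x'⟩ := v
  have hv : inD (A := A) C C' r y + inC (A := A) C C' r x + inC' (A := A) C C' r x'
      = ((y, (x, x')) : Cone C C' (r + 1)) :=
    show ((y + 0 + 0, (0 + x + 0, 0 + 0 + x')) : C' (r + 1) × (C r × C' r)) = (y, (x, x')) by
      simp
  rw [toL_dualMap, toL_dualMap, toL_dualMap, ← map_add, ← map_add, hv]

lemma dualMap_coneIncl (r : ℕ) (ξ : Dual A (Cone C C' (r + 1))) :
    dualMap (coneIncl C C' f r) ξ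
      = dualMap (inC C C' r) ξ - dualMap (f r) (dualMap (inC' C C' r) ξ) :=
  Dual.ext fun x => by
    rw [toL_dualMap, toL_cone]
    show toL A _ 0 + _ + toL A _ (-f r x) = _
    rw [map_zero, zero_add, map_neg, ← sub_eq_add_neg]
    rfl

lemma Phi_succ_apply {φ : ℕ → ∀ r m : ℕ, Dual A (C m) →ₗ[A] C r}
    {φ' : ℕ → ∀ r m : ℕ, Dual A (C' m) →ₗ[A] C' r} {r rt : ℕ}
    (hc : f rt ∘ₗ φ 0 rt r ∘ₗ dualMap (f r) = φ' 0 rt r) (ξ : Dual A (Cone C C' (r + 1))) :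
    Phi C C' f φ φ' (r + 1) rt ξ = f rt (φ 0 rt r (dualMap (coneIncl C C' f r) ξ)) := by
  show (f rt ∘ₗ φ 0 rt r ∘ₗ dualMap (inC C C' r) - φ' 0 rt r ∘ₗ dualMap (inC' C C' r)) ξ = _
  rw [dualMap_coneIncl, ← hc]
  simp only [LinearMap.sub_apply, LinearMap.comp_apply, map_sub]

lemma eq_zero_of_dualMap_dCone_zero_eq_zero {ξ : Dual A (Cone C C' 0)}
    (hξ : dualMap (dCone C C' dC dC' f 0) ξ = 0) : ξ = 0 :=
  Dual.ext fun (x : C' 0) => by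
    have hx : dCone C C' dC dC' f 0 (inC' (A := A) C C' 0 x) = x :=
      show dC' 0 0 + (f 0 0 + x) = x by simp
    show toL A ξ x = 0
    simpa [hx] using congr(toL A $hξ (inC' (A := A) C C' 0 x))

lemma dualMap_dC'_dualMap_inC' {r : ℕ} {ξ : Dual A (Cone C C' (r + 1))}
    (hξ : dualMap (dCone C C' dC dC' f (r + 1)) ξ = 0) :
    dualMap (dC' r) (dualMap (inC' C C' r) ξ) = ((-1 : ℤ) ^ r) • dualMap (inD C C' r) ξ :=
  Dual.ext fun y => by
    have := congr(toL A $hξ (inC' (A := A) C C' (r + 1) y))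
    rw [toL_dualMap, toL_zero, toL_cone ξ] at this
    simp only [dCone_succ_fst, dCone_succ_snd, inC'_fst, inC'_snd, map_zero, add_zero,
      zero_add, pow_succ, mul_neg_one, neg_smul, map_neg, map_zsmul, neg_add_eq_zero] at this
    rw [toL_zsmul, toL_dualMap, this]

lemma exists_dualMap_dCone_zero_eq {ξ : Dual A (Cone C C' 1)}
    (hξ : dualMap (dCone C C' dC dC' f 1) ξ = 0) (h : dualMap (coneIncl C C' f 0) ξ = 0) :
    ∃ η, dualMap (dCone C C' dC dC' f 0) η = ξ := by
  have hD := dualMap_dC'_dualMap_inC' hξ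
  rw [pow_zero, one_smul] at hD
  rw [dualMap_coneIncl, sub_eq_zero] at h
  set ξC' := dualMap (inC' C C' 0) ξ
  refine ⟨ξC', Dual.ext fun v => ?_⟩
  rw [toL_cone ξ v, ← hD, h]
  show toL A ξC' (dC' 0 v.1 + (f 0 v.2.1 + v.2.2))
    = toL A ξC' (dC' 0 v.1) + toL A ξC' (f 0 v.2.1) + toL A ξC' v.2.2
  rw [map_add, map_add, add_assoc]

lemma exists_dualMap_dCone_succ_eq {p : ℕ} {ξ : Dual A (Cone C C' (p + 2))}
    (hξ : dualMap (dCone C C' dC dC' f (p + 2)) ξ = 0) {ζ₀ : Dual A (C p)}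
    (h : dualMap (dC p) ζ₀ = dualMap (coneIncl C C' f (p + 1)) ξ) :
    ∃ η, dualMap (dCone C C' dC dC' f (p + 1)) η = ξ := by
  have hD := dualMap_dC'_dualMap_inC' hξ
  rw [dualMap_coneIncl] at h
  set ξC' := dualMap (inC' C C' (p + 1)) ξ
  refine ⟨((-1 : ℤ) ^ (p + 1)) • dualMap (prD C C' p) ξC' + dualMap (prC C C' p) ζ₀,
    Dual.ext fun v => ?_⟩
  rw [toL_cone ξ v]
  show ((-1 : ℤ) ^ (p + 1)) • toL A ξC' (dC' (p + 1) v.1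
      + ((-1 : ℤ) ^ (p + 1)) • (f (p + 1) v.2.1 + v.2.2)) + toL A ζ₀ (dC p v.2.1) = _
  rw [map_add, map_zsmul, map_add, ← toL_dualMap (dC' (p + 1)), hD, ← toL_dualMap (dC p), h,
    ← toL_dualMap (f (p + 1))]
  simp only [toL_zsmul, toL_sub, smul_add, neg_one_pow_smul_smul]
  abel

lemma exists_dualMap_dCone_eq {r : ℕ} {ξ : Dual A (Cone C C' (r + 1))}
    (hξ : dualMap (dCone C C' dC dC' f (r + 1)) ξ = 0)
    (h : dualMap (coneIncl C C' f r) ξ ∈ coboundaries dC r) :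
    ∃ η, dualMap (dCone C C' dC dC' f r) η = ξ := by
  cases r with
  | zero => exact exists_dualMap_dCone_zero_eq hξ ((Submodule.mem_bot A).mp h)
  | succ p =>
    obtain ⟨ζ₀, hζ₀⟩ := h
    exact exists_dualMap_dCone_succ_eq hξ hζ₀

end Cone

section SumStructure

variable {A : Type*} [Ring A] [StarRing A] {M M' N N' : Type*}
  [AddCommGroup M] [Module A M] [AddCommGroup M'] [Module A M']
  [AddCommGroup N] [Module A N] [AddCommGroup N'] [Module A N']

@[simp] lemma dualMap_inl_dualMap_prodMap (a : M →ₗ[A] M') (b : N →ₗ[A] N') (ξ : Dual A (M' × N')) :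
    dualMap (LinearMap.inl A M N) (dualMap (LinearMap.prodMap a b) ξ)
      = dualMap a (dualMap (LinearMap.inl A M' N') ξ) :=
  Dual.ext fun x => by simp

@[simp] lemma dualMap_inr_dualMap_prodMap (a : M →ₗ[A] M') (b : N →ₗ[A] N') (ξ : Dual A (M' × N')) :
    dualMap (LinearMap.inr A M N) (dualMap (LinearMap.prodMap a b) ξ)
      = dualMap b (dualMap (LinearMap.inr A M' N') ξ) :=
  Dual.ext fun x => by simp

variable {C C' : ℕ → Type u} [∀ r, AddCommGroup (C r)] [∀ r, AddCommGroup (C' r)]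
  [∀ r, Module A (C r)] [∀ r, Module A (C' r)]
  {φ : ℕ → ∀ r m : ℕ, Dual A (C m) →ₗ[A] C r} {φ' : ℕ → ∀ r m : ℕ, Dual A (C' m) →ₗ[A] C' r}

lemma sumPhi_apply (s r m : ℕ) (ξ : Dual A (C m × C' m)) :
    sumPhi C C' φ φ' s r m ξ = (φ s r m (dualMap (LinearMap.inl A (C m) (C' m)) ξ),
      -φ' s r m (dualMap (LinearMap.inr A (C m) (C' m)) ξ)) := rfl

theorem coprod_comp_sumPhi_comp_dualMap_coprod {f : ∀ r, C r →ₗ[A] C' r} {s r m : ℕ}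
    (hc : f r ∘ₗ φ s r m ∘ₗ dualMap (f m) = φ' s r m) :
    LinearMap.coprod (f r) LinearMap.id ∘ₗ sumPhi C C' φ φ' s r m ∘ₗ
      dualMap (LinearMap.coprod (f m) LinearMap.id) = 0 :=
  LinearMap.ext fun ξ => by
    simp [sumPhi_apply, dualMap_dualMap, ← hc]

theorem sumPhi_structure_eq_zero {dC : ∀ r, C (r + 1) →ₗ[A] C r}
    {dC' : ∀ r, C' (r + 1) →ₗ[A] C' r} {s r m : ℕ}
    (h : dC r ∘ₗ φ s (r + 1) m + ((-1 : ℤ) ^ r) • (φ s r (m + 1) ∘ₗ dualMap (dC m)) = 0)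
    (h' : dC' r ∘ₗ φ' s (r + 1) m + ((-1 : ℤ) ^ r) • (φ' s r (m + 1) ∘ₗ dualMap (dC' m)) = 0) :
    LinearMap.prodMap (dC r) (dC' r) ∘ₗ sumPhi C C' φ φ' s (r + 1) m
      + ((-1 : ℤ) ^ r) • (sumPhi C C' φ φ' s r (m + 1) ∘ₗ
          dualMap (LinearMap.prodMap (dC m) (dC' m))) = 0 :=
  LinearMap.ext fun ξ => Prod.ext
    (by simpa [sumPhi_apply] using LinearMap.congr_fun h (dualMap (LinearMap.inl A _ _) ξ))
    (by simpa [sumPhi_apply, neg_add_eq_zero, add_eq_zero_iff_eq_neg, neg_eq_iff_eq_neg] using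
      LinearMap.congr_fun h' (dualMap (LinearMap.inr A _ _) ξ))

theorem sumPhi_structure_succ_eq_zero {dC : ∀ r, C (r + 1) →ₗ[A] C r}
    {dC' : ∀ r, C' (r + 1) →ₗ[A] C' r} {n s r m : ℕ}
    (h : evMap A (C r) ∘ₗ
          (dC r ∘ₗ φ (s + 1) (r + 1) m
            + ((-1 : ℤ) ^ r) • (φ (s + 1) r (m + 1) ∘ₗ dualMap (dC m))
            + ((-1 : ℤ) ^ (n + s)) • φ s r m)
        + (((-1 : ℤ) ^ (n + s) * (-1 : ℤ) ^ (s + 1) * (-1 : ℤ) ^ (r * m)) •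
            dualMap (φ s m r)) = 0)
    (h' : evMap A (C' r) ∘ₗ
          (dC' r ∘ₗ φ' (s + 1) (r + 1) m
            + ((-1 : ℤ) ^ r) • (φ' (s + 1) r (m + 1) ∘ₗ dualMap (dC' m))
            + ((-1 : ℤ) ^ (n + s)) • φ' s r m)
        + (((-1 : ℤ) ^ (n + s) * (-1 : ℤ) ^ (s + 1) * (-1 : ℤ) ^ (r * m)) •
            dualMap (φ' s m r)) = 0) :
    evMap A (C r × C' r) ∘ₗ
        (LinearMap.prodMap (dC r) (dC' r) ∘ₗ sumPhi C C' φ φ' (s + 1) (r + 1) m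
          + ((-1 : ℤ) ^ r) • (sumPhi C C' φ φ' (s + 1) r (m + 1) ∘ₗ
              dualMap (LinearMap.prodMap (dC m) (dC' m)))
          + ((-1 : ℤ) ^ (n + s)) • sumPhi C C' φ φ' s r m)
      + (((-1 : ℤ) ^ (n + s) * (-1 : ℤ) ^ (s + 1) * (-1 : ℤ) ^ (r * m)) •
          (dualMap (sumPhi C C' φ φ' s m r) :
            Dual A (C m × C' m) →ₗ[A] Dual A (Dual A (C r × C' r)))) = 0 := by
  refine LinearMap.ext fun ξ => Dual.ext fun ζ => ?_
  have e := congr(toL A $(LinearMap.congr_fun h (dualMap (LinearMap.inl A _ _) ξ))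
    (dualMap (LinearMap.inl A _ _) ζ))
  have e' := congr(toL A $(LinearMap.congr_fun h' (dualMap (LinearMap.inr A _ _) ξ))
    (dualMap (LinearMap.inr A _ _) ζ))
  simp only [LinearMap.add_apply, LinearMap.smul_apply, LinearMap.comp_apply,
    LinearMap.zero_apply, toL_add, toL_zsmul, toL_evMap, toL_zero, sumPhi_apply,
    LinearMap.prodMap_apply, dualMap_inl_dualMap_prodMap, dualMap_inr_dualMap_prodMap,
    toL_dualMap, toL_prod_mk, map_neg, map_add, map_zsmul, star_add, star_neg, smul_neg,
    smul_add] at e e' ⊢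
  rw [← sub_eq_zero.mpr (e.trans e'.symm)]
  abel

end SumStructure

section ProductCobordism

variable {A : Type*} [Ring A] [StarRing A]
  {C C' : ℕ → Type u} [∀ r, AddCommGroup (C r)] [∀ r, AddCommGroup (C' r)]
  [∀ r, Module A (C r)] [∀ r, Module A (C' r)]
  {dC : ∀ r, C (r + 1) →ₗ[A] C r} {dC' : ∀ r, C' (r + 1) →ₗ[A] C' r} {f : ∀ r, C r →ₗ[A] C' r}
  {φ : ℕ → ∀ r m : ℕ, Dual A (C m) →ₗ[A] C r} {φ' : ℕ → ∀ r m : ℕ, Dual A (C' m) →ₗ[A] C' r}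
  {n : ℕ}

theorem Phi_chain_map (hf : ∀ r, dC' r ∘ₗ f (r + 1) = f r ∘ₗ dC r)
    (hφ₀ : ∀ r m, m + r + 1 = n →
      dC r ∘ₗ φ 0 (r + 1) m + ((-1 : ℤ) ^ r) • (φ 0 r (m + 1) ∘ₗ dualMap (dC m)) = 0)
    (hc : ∀ r m, m + r = n → f r ∘ₗ φ 0 r m ∘ₗ dualMap (f m) = φ' 0 r m)
    {rc rt : ℕ} (h : rc + rt = n) :
    dC' rt ∘ₗ Phi C C' f φ φ' rc (rt + 1)
      + ((-1 : ℤ) ^ rt) • (Phi C C' f φ φ' (rc + 1) rt ∘ₗ dualMap (dCone C C' dC dC' f rc))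
      = 0 := by
  refine LinearMap.ext fun ξ => ?_
  simp only [LinearMap.add_apply, LinearMap.smul_apply, LinearMap.comp_apply,
    LinearMap.zero_apply]
  rw [Phi_succ_apply (hc rt rc h), dualMap_dualMap]
  cases rc with
  | zero =>
    rw [dCone_comp_coneIncl_zero]
    show dC' rt 0 + _ = 0
    simp
  | succ r =>
    rw [dCone_comp_coneIncl_succ hf, ← dualMap_dualMap, Phi_succ_apply (hc (rt + 1) r (by omega)),
      ← LinearMap.comp_apply (dC' rt), hf, LinearMap.comp_apply, ← map_zsmul, ← map_add]
    simpa using congr_arg (f rt) (LinearMap.congr_fun (hφ₀ rt r (by omega))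
      (dualMap (coneIncl C C' f r) ξ))

theorem exists_dualMap_dCone_eq_of_Phi_mem_range (hf : ∀ r, dC' r ∘ₗ f (r + 1) = f r ∘ₗ dC r)
    (hφ₀ : ∀ r m, m + r + 1 = n →
      dC r ∘ₗ φ 0 (r + 1) m + ((-1 : ℤ) ^ r) • (φ 0 r (m + 1) ∘ₗ dualMap (dC m)) = 0)
    (hc : ∀ r m, m + r = n → f r ∘ₗ φ 0 r m ∘ₗ dualMap (f m) = φ' 0 r m)
    (E : HomotopyInverse dC dC' f) (P : PoincareInverse dC n (φ 0)) [Subsingleton (C (n + 1))]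
    {rc rt : ℕ} (h : rc + rt = n) {ξ : Dual A (Cone C C' (rc + 1))}
    (hξ : dualMap (dCone C C' dC dC' f (rc + 1)) ξ = 0)
    (hΦ : Phi C C' f φ φ' (rc + 1) rt ξ ∈ LinearMap.range (dC' rt)) :
    ∃ η, dualMap (dCone C C' dC dC' f rc) η = ξ := by
  have hζ : dualMap (dC rc) (dualMap (coneIncl C C' f rc) ξ) = 0 := by
    rw [dualMap_dualMap, ← dCone_comp_coneIncl_succ hf, ← dualMap_dualMap, hξ, map_zero]
  rw [Phi_succ_apply (hc rt rc h)] at hΦ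
  have hcyc := apply_mem_cycles_of_dualMap_eq_zero hφ₀ h hζ
  exact exists_dualMap_dCone_eq hξ
    (P.mem_coboundaries_of_mem_range h hζ (E.mem_range_of_map_mem_range hcyc hΦ))

theorem exists_cocycle_Phi_sub_mem_range (hf : ∀ r, dC' r ∘ₗ f (r + 1) = f r ∘ₗ dC r)
    (hc : ∀ r m, m + r = n → f r ∘ₗ φ 0 r m ∘ₗ dualMap (f m) = φ' 0 r m)
    (E : HomotopyInverse dC dC' f) (P : PoincareInverse dC n (φ 0))
    [Subsingleton (C (n + 1))] [Subsingleton (C' (n + 1))]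
    {rc rt : ℕ} (h : rc + rt = n + 1) {y : C' rt} (hy : y ∈ cycles dC' rt) :
    ∃ ξ : Dual A (Cone C C' rc), dualMap (dCone C C' dC dC' f rc) ξ = 0 ∧
      ∃ z, dC' rt z = Phi C C' f φ φ' rc rt ξ - y := by
  cases rc with
  | zero =>
    obtain rfl : rt = n + 1 := by omega
    exact ⟨0, map_zero _, 0, by rw [Subsingleton.elim y 0, map_zero, map_zero, sub_zero]⟩
  | succ m =>
    have hw : E.g rt y ∈ cycles dC rt := map_mem_cycles E.comm hy
    refine ⟨dualMap (prC C C' m) (P.ψ rt m (E.g rt y)), ?_, f (rt + 1) (P.hh rt (E.g rt y))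
      + E.h' rt y, ?_⟩
    · rw [dualMap_dualMap, prC_comp_dCone, ← dualMap_dualMap,
        P.dualMap_d_ψ_eq_zero (by omega) hw, map_zero]
    · have hφψ := (P.φψ rt m (by omega)).apply_sub_eq hw
      have hfg := (E.fg rt).apply_sub_eq hy
      rw [LinearMap.comp_apply] at hφψ hfg
      rw [Phi_succ_apply (hc rt m (by omega)), dualMap_dualMap, prC_comp_coneIncl, dualMap_id,
        map_add, ← LinearMap.comp_apply (dC' rt), hf, LinearMap.comp_apply, ← hφψ, ← hfg,
        map_sub]
      abel

end ProductCobordism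

end stmt11

open stmt11 in
theorem stmt_11_general (A : Type*) [Ring A] [StarRing A] (n : ℕ)
    (C C' : ℕ → Type)
    [∀ r, AddCommGroup (C r)] [∀ r, Module A (C r)]
    [∀ r, AddCommGroup (C' r)] [∀ r, Module A (C' r)]
    -- n-dimensional
    (hbd : ∀ r, n < r → Subsingleton (C r))
    (hbd' : ∀ r, n < r → Subsingleton (C' r))
    (dC : ∀ r, C (r + 1) →ₗ[A] C r) (dC' : ∀ r, C' (r + 1) →ₗ[A] C' r)
    -- the symmetric structures
    (φ : ∀ s r m : ℕ, Dual A (C m) →ₗ[A] C r)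
    (φ' : ∀ s r m : ℕ, Dual A (C' m) →ₗ[A] C' r)
    (hφ0 : ∀ r m, m + r + 1 = n →
      dC r ∘ₗ φ 0 (r + 1) m
        + ((-1 : ℤ) ^ r) • (φ 0 r (m + 1) ∘ₗ dualMap (dC m)) = 0)
    (hφ0' : ∀ r m, m + r + 1 = n →
      dC' r ∘ₗ φ' 0 (r + 1) m
        + ((-1 : ℤ) ^ r) • (φ' 0 r (m + 1) ∘ₗ dualMap (dC' m)) = 0)
    (hφS : ∀ s r m, m + r = n + s →
      evMap A (C r) ∘ₗ
          (dC r ∘ₗ φ (s + 1) (r + 1) m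
            + ((-1 : ℤ) ^ r) • (φ (s + 1) r (m + 1) ∘ₗ dualMap (dC m))
            + ((-1 : ℤ) ^ (n + s)) • φ s r m)
        + (((-1 : ℤ) ^ (n + s) * (-1 : ℤ) ^ (s + 1) * (-1 : ℤ) ^ (r * m)) •
            dualMap (φ s m r)) = 0)
    (hφS' : ∀ s r m, m + r = n + s →
      evMap A (C' r) ∘ₗ
          (dC' r ∘ₗ φ' (s + 1) (r + 1) m
            + ((-1 : ℤ) ^ r) • (φ' (s + 1) r (m + 1) ∘ₗ dualMap (dC' m))
            + ((-1 : ℤ) ^ (n + s)) • φ' s r m)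
        + (((-1 : ℤ) ^ (n + s) * (-1 : ℤ) ^ (s + 1) * (-1 : ℤ) ^ (r * m)) •
            dualMap (φ' s m r)) = 0)
    -- (C, φ) is Poincaré: φ₀ : C^{n-*} → C_* is a chain homotopy equivalence
    (hP : ∃ (ψ : ∀ r m : ℕ, C r →ₗ[A] Dual A (C m))
        (hh : ∀ r, C r →ₗ[A] C (r + 1))
        (kk : ∀ m, Dual A (C (m + 1)) →ₗ[A] Dual A (C m)),
      (∀ r m, r + m ≠ n → ψ r m = 0) ∧
      (∀ r m, m + r + 1 = n →
        ((-1 : ℤ) ^ (r + 1)) • (dualMap (dC m) ∘ₗ ψ (r + 1) m)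
          = ψ r (m + 1) ∘ₗ dC r) ∧
      (φ 0 0 n ∘ₗ ψ 0 n - LinearMap.id = dC 0 ∘ₗ hh 0) ∧
      (∀ r m, m + (r + 1) = n →
        φ 0 (r + 1) m ∘ₗ ψ (r + 1) m - LinearMap.id
          = dC (r + 1) ∘ₗ hh (r + 1) + hh r ∘ₗ dC r) ∧
      (ψ n 0 ∘ₗ φ 0 n 0 - LinearMap.id
        = ((-1 : ℤ) ^ n) • (kk 0 ∘ₗ dualMap (dC 0))) ∧
      (∀ r m, (m + 1) + r = n →
        ψ r (m + 1) ∘ₗ φ 0 r (m + 1) - LinearMap.id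
          = ((-1 : ℤ) ^ (r + 1)) • (dualMap (dC m) ∘ₗ kk m)
            + ((-1 : ℤ) ^ r) • (kk (m + 1) ∘ₗ dualMap (dC (m + 1)))))
    -- f : C → C' is a chain homotopy equivalence …
    (f : ∀ r, C r →ₗ[A] C' r)
    (hf : ∀ r, dC' r ∘ₗ f (r + 1) = f r ∘ₗ dC r)
    (hfe : ∃ (g : ∀ r, C' r →ₗ[A] C r) (h : ∀ r, C r →ₗ[A] C (r + 1))
        (h' : ∀ r, C' r →ₗ[A] C' (r + 1)),
      (∀ r, dC r ∘ₗ g (r + 1) = g r ∘ₗ dC' r) ∧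
      (g 0 ∘ₗ f 0 - LinearMap.id = dC 0 ∘ₗ h 0) ∧
      (∀ r, g (r + 1) ∘ₗ f (r + 1) - LinearMap.id
        = dC (r + 1) ∘ₗ h (r + 1) + h r ∘ₗ dC r) ∧
      (f 0 ∘ₗ g 0 - LinearMap.id = dC' 0 ∘ₗ h' 0) ∧
      (∀ r, f (r + 1) ∘ₗ g (r + 1) - LinearMap.id
        = dC' (r + 1) ∘ₗ h' (r + 1) + h' r ∘ₗ dC' r))
    -- … with f ∘ φ_s ∘ f* = φ'_s
    (hcompat : ∀ s r m, m + r = n + s →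
      f r ∘ₗ φ s r m ∘ₗ dualMap (f m) = φ' s r m) :
    -- Conclusion (1): the relative symmetric-pair equations hold:
    -- (f,1) ∘ (φ ⊕ -φ')_s ∘ (f,1)* = 0 …
    (∀ s r m : ℕ, m + r = n + s →
      LinearMap.coprod (f r) LinearMap.id ∘ₗ sumPhi C C' φ φ' s r m ∘ₗ
          dualMap (LinearMap.coprod (f m) LinearMap.id) = 0) ∧
    -- … and φ ⊕ -φ' satisfies the symmetric-structure equations on C ⊕ C'
    (∀ r m : ℕ, m + r + 1 = n →
      LinearMap.prodMap (dC r) (dC' r) ∘ₗ sumPhi C C' φ φ' 0 (r + 1) m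
        + ((-1 : ℤ) ^ r) • (sumPhi C C' φ φ' 0 r (m + 1) ∘ₗ
            dualMap (LinearMap.prodMap (dC m) (dC' m))) = 0) ∧
    (∀ s r m : ℕ, m + r = n + s →
      evMap A (C r × C' r) ∘ₗ
          (LinearMap.prodMap (dC r) (dC' r) ∘ₗ sumPhi C C' φ φ' (s + 1) (r + 1) m
            + ((-1 : ℤ) ^ r) • (sumPhi C C' φ φ' (s + 1) r (m + 1) ∘ₗ
                dualMap (LinearMap.prodMap (dC m) (dC' m)))
            + ((-1 : ℤ) ^ (n + s)) • sumPhi C C' φ φ' s r m)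
        + (((-1 : ℤ) ^ (n + s) * (-1 : ℤ) ^ (s + 1) * (-1 : ℤ) ^ (r * m)) •
            (dualMap (sumPhi C C' φ φ' s m r) :
              Dual A (C m × C' m) →ₗ[A] Dual A (Dual A (C r × C' r)))) = 0) ∧
    -- Conclusion (2): (0, (f,1)∘(φ₀⊕-φ'₀)) is a chain map 𝒞^{n+1-*} → C'_* …
    (∀ rc rt : ℕ, rc + rt = n →
      dC' rt ∘ₗ Phi C C' f φ φ' rc (rt + 1)
        + ((-1 : ℤ) ^ rt) • (Phi C C' f φ φ' (rc + 1) rt ∘ₗ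
            dualMap (dCone C C' dC dC' f rc)) = 0) ∧
    -- … which induces isomorphisms H^r(𝒞((f,1))) ≅ H_{n+1-r}(C'):
    -- injectivity on cohomology (cone degrees rc ≥ 1) …
    (∀ rc rt : ℕ, rc + 1 + rt = n + 1 →
      ∀ ξ : Dual A (Cone C C' (rc + 1)),
        dualMap (dCone C C' dC dC' f (rc + 1)) ξ = 0 →
        (∃ z, dC' rt z = Phi C C' f φ φ' (rc + 1) rt ξ) →
        ∃ η, dualMap (dCone C C' dC dC' f rc) η = ξ) ∧
    -- … and in cone degree 0 …
    (∀ ξ : Dual A (Cone C C' 0),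
      dualMap (dCone C C' dC dC' f 0) ξ = 0 →
      (∃ z, dC' (n + 1) z = Phi C C' f φ φ' 0 (n + 1) ξ) → ξ = 0) ∧
    -- … surjectivity onto homology (target degrees rt ≥ 1) …
    (∀ rc rt : ℕ, rc + (rt + 1) = n + 1 →
      ∀ y : C' (rt + 1), dC' rt y = 0 →
        ∃ ξ : Dual A (Cone C C' rc),
          dualMap (dCone C C' dC dC' f rc) ξ = 0 ∧
          ∃ z, dC' (rt + 1) z = Phi C C' f φ φ' rc (rt + 1) ξ - y) ∧
    -- … and in target degree 0
    (∀ y : C' 0,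
      ∃ ξ : Dual A (Cone C C' (n + 1)),
        dualMap (dCone C C' dC dC' f (n + 1)) ξ = 0 ∧
        ∃ z, dC' 0 z = Phi C C' f φ φ' (n + 1) 0 ξ - y) := by
  have := hbd (n + 1) n.lt_succ_self
  have := hbd' (n + 1) n.lt_succ_self
  have hc : ∀ r m, m + r = n → f r ∘ₗ φ 0 r m ∘ₗ dualMap (f m) = φ' 0 r m :=
    fun r m => hcompat 0 r m
  obtain ⟨ψ, hh, kk, -, hψd, hφψ0, hφψS, hψφ0, hψφS⟩ := hP
  have P : PoincareInverse dC n (φ 0) := ⟨ψ, hh, kk, hψd, fun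
    | 0, _, rfl => hφψ0
    | r + 1, m, hm => hφψS r m hm, hψφ0, hψφS⟩
  obtain ⟨g, h, h', hg, hgf0, hgfS, hfg0, hfgS⟩ := hfe
  have E : HomotopyInverse dC dC' f :=
    ⟨g, h, h', hg, fun | 0 => hgf0 | r + 1 => hgfS r, fun | 0 => hfg0 | r + 1 => hfgS r⟩
  exact ⟨fun s r m hs => coprod_comp_sumPhi_comp_dualMap_coprod (hcompat s r m hs),
    fun r m hs => sumPhi_structure_eq_zero (hφ0 r m hs) (hφ0' r m hs),
    fun s r m hs => sumPhi_structure_succ_eq_zero (hφS s r m hs) (hφS' s r m hs),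
    fun _ _ hs => Phi_chain_map hf hφ0 hc hs,
    fun _ _ hs _ hξ hΦ => exists_dualMap_dCone_eq_of_Phi_mem_range hf hφ0 hc E P (by omega) hξ hΦ,
    fun _ hξ _ => eq_zero_of_dualMap_dCone_zero_eq_zero hξ,
    fun _ _ hs _ hy => exists_cocycle_Phi_sub_mem_range hf hc E P hs hy,
    fun _ => exists_cocycle_Phi_sub_mem_range hf hc E P (by omega) trivial⟩

set_option maxHeartbeats 1000000 in
open stmt11 in
/-- Let `A` be a ring with involution, `n ≥ 0`, and let
`(C, φ)` and `(C', φ')` be `n`-dimensional symmetric Poincaré complexes of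
finitely generated projective left `A`-modules: collections
`φ_s : C^{n-r+s} → C_r`, `φ'_s : C'^{n-r+s} → C'_r` (recorded here by their
components `φ s r m : Dual(C_m) → C_r`, relevant when `m + r = n + s`)
satisfying the symmetric-structure equations
`dφ_s + (-1)^rφ_sδ + (-1)^{n+s-1}(φ_{s-1} + (-1)^sTφ_{s-1}) = 0`
(the `s ≥ 1` equations being recorded after composition with the canonical
embedding `ev : C_r → C_r**`, under which `ev ∘ Tθ = (-1)^{pq}·θ`-dual), with
`φ₀ : C^{n-*} → C_*` and `φ'₀` chain homotopy equivalences.  Let `f : C → C'`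
be a chain homotopy equivalence with `f ∘ φ_s ∘ f* = φ'_s` for all `s`.  Then
`((f,1) : C ⊕ C' → C', (0, φ ⊕ -φ'))` is an `(n+1)`-dimensional symmetric
Poincaré pair:  the relative symmetric-pair equations hold — i.e.
`(f,1) ∘ (φ ⊕ -φ')_s ∘ (f,1)* = 0` and `φ ⊕ -φ'` satisfies the
symmetric-structure equations — and the chain map `𝒞((f,1))^{n+1-*} → C'_*`
with components `(0, (f,1)∘(φ₀ ⊕ -φ'₀))` induces isomorphisms
`H^r(𝒞((f,1))) ≅ H_{n+1-r}(C')` for all `0 ≤ r ≤ n+1`.  (This is the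
algebraic product cobordism.) -/
theorem stmt_11 (A : Type*) [Ring A] [StarRing A] (n : ℕ)
    (C C' : ℕ → Type)
    [∀ r, AddCommGroup (C r)] [∀ r, Module A (C r)]
    [∀ r, AddCommGroup (C' r)] [∀ r, Module A (C' r)]
    -- finitely generated projective
    (hfg : ∀ r, Module.Finite A (C r)) (hproj : ∀ r, Module.Projective A (C r))
    (hfg' : ∀ r, Module.Finite A (C' r)) (hproj' : ∀ r, Module.Projective A (C' r))
    -- n-dimensional
    (hbd : ∀ r, n < r → Subsingleton (C r))
    (hbd' : ∀ r, n < r → Subsingleton (C' r))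
    (dC : ∀ r, C (r + 1) →ₗ[A] C r) (dC' : ∀ r, C' (r + 1) →ₗ[A] C' r)
    (hdd : ∀ r (x : C (r + 2)), dC r (dC (r + 1) x) = 0)
    (hdd' : ∀ r (x : C' (r + 2)), dC' r (dC' (r + 1) x) = 0)
    -- the symmetric structures
    (φ : ∀ s r m : ℕ, Dual A (C m) →ₗ[A] C r)
    (φ' : ∀ s r m : ℕ, Dual A (C' m) →ₗ[A] C' r)
    (hφsupp : ∀ s r m, m + r ≠ n + s → φ s r m = 0)
    (hφsupp' : ∀ s r m, m + r ≠ n + s → φ' s r m = 0)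
    (hφ0 : ∀ r m, m + r + 1 = n →
      dC r ∘ₗ φ 0 (r + 1) m
        + ((-1 : ℤ) ^ r) • (φ 0 r (m + 1) ∘ₗ dualMap (dC m)) = 0)
    (hφ0' : ∀ r m, m + r + 1 = n →
      dC' r ∘ₗ φ' 0 (r + 1) m
        + ((-1 : ℤ) ^ r) • (φ' 0 r (m + 1) ∘ₗ dualMap (dC' m)) = 0)
    (hφS : ∀ s r m, m + r = n + s →
      evMap A (C r) ∘ₗ
          (dC r ∘ₗ φ (s + 1) (r + 1) m
            + ((-1 : ℤ) ^ r) • (φ (s + 1) r (m + 1) ∘ₗ dualMap (dC m))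
            + ((-1 : ℤ) ^ (n + s)) • φ s r m)
        + (((-1 : ℤ) ^ (n + s) * (-1 : ℤ) ^ (s + 1) * (-1 : ℤ) ^ (r * m)) •
            dualMap (φ s m r)) = 0)
    (hφS' : ∀ s r m, m + r = n + s →
      evMap A (C' r) ∘ₗ
          (dC' r ∘ₗ φ' (s + 1) (r + 1) m
            + ((-1 : ℤ) ^ r) • (φ' (s + 1) r (m + 1) ∘ₗ dualMap (dC' m))
            + ((-1 : ℤ) ^ (n + s)) • φ' s r m)
        + (((-1 : ℤ) ^ (n + s) * (-1 : ℤ) ^ (s + 1) * (-1 : ℤ) ^ (r * m)) •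
            dualMap (φ' s m r)) = 0)
    -- (C, φ) is Poincaré: φ₀ : C^{n-*} → C_* is a chain homotopy equivalence
    (hP : ∃ (ψ : ∀ r m : ℕ, C r →ₗ[A] Dual A (C m))
        (hh : ∀ r, C r →ₗ[A] C (r + 1))
        (kk : ∀ m, Dual A (C (m + 1)) →ₗ[A] Dual A (C m)),
      (∀ r m, r + m ≠ n → ψ r m = 0) ∧
      (∀ r m, m + r + 1 = n →
        ((-1 : ℤ) ^ (r + 1)) • (dualMap (dC m) ∘ₗ ψ (r + 1) m)
          = ψ r (m + 1) ∘ₗ dC r) ∧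
      (φ 0 0 n ∘ₗ ψ 0 n - LinearMap.id = dC 0 ∘ₗ hh 0) ∧
      (∀ r m, m + (r + 1) = n →
        φ 0 (r + 1) m ∘ₗ ψ (r + 1) m - LinearMap.id
          = dC (r + 1) ∘ₗ hh (r + 1) + hh r ∘ₗ dC r) ∧
      (ψ n 0 ∘ₗ φ 0 n 0 - LinearMap.id
        = ((-1 : ℤ) ^ n) • (kk 0 ∘ₗ dualMap (dC 0))) ∧
      (∀ r m, (m + 1) + r = n →
        ψ r (m + 1) ∘ₗ φ 0 r (m + 1) - LinearMap.id
          = ((-1 : ℤ) ^ (r + 1)) • (dualMap (dC m) ∘ₗ kk m)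
            + ((-1 : ℤ) ^ r) • (kk (m + 1) ∘ₗ dualMap (dC (m + 1)))))
    -- (C', φ') is Poincaré
    (hP' : ∃ (ψ : ∀ r m : ℕ, C' r →ₗ[A] Dual A (C' m))
        (hh : ∀ r, C' r →ₗ[A] C' (r + 1))
        (kk : ∀ m, Dual A (C' (m + 1)) →ₗ[A] Dual A (C' m)),
      (∀ r m, r + m ≠ n → ψ r m = 0) ∧
      (∀ r m, m + r + 1 = n →
        ((-1 : ℤ) ^ (r + 1)) • (dualMap (dC' m) ∘ₗ ψ (r + 1) m)
          = ψ r (m + 1) ∘ₗ dC' r) ∧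
      (φ' 0 0 n ∘ₗ ψ 0 n - LinearMap.id = dC' 0 ∘ₗ hh 0) ∧
      (∀ r m, m + (r + 1) = n →
        φ' 0 (r + 1) m ∘ₗ ψ (r + 1) m - LinearMap.id
          = dC' (r + 1) ∘ₗ hh (r + 1) + hh r ∘ₗ dC' r) ∧
      (ψ n 0 ∘ₗ φ' 0 n 0 - LinearMap.id
        = ((-1 : ℤ) ^ n) • (kk 0 ∘ₗ dualMap (dC' 0))) ∧
      (∀ r m, (m + 1) + r = n →
        ψ r (m + 1) ∘ₗ φ' 0 r (m + 1) - LinearMap.id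
          = ((-1 : ℤ) ^ (r + 1)) • (dualMap (dC' m) ∘ₗ kk m)
            + ((-1 : ℤ) ^ r) • (kk (m + 1) ∘ₗ dualMap (dC' (m + 1)))))
    -- f : C → C' is a chain homotopy equivalence …
    (f : ∀ r, C r →ₗ[A] C' r)
    (hf : ∀ r, dC' r ∘ₗ f (r + 1) = f r ∘ₗ dC r)
    (hfe : ∃ (g : ∀ r, C' r →ₗ[A] C r) (h : ∀ r, C r →ₗ[A] C (r + 1))
        (h' : ∀ r, C' r →ₗ[A] C' (r + 1)),
      (∀ r, dC r ∘ₗ g (r + 1) = g r ∘ₗ dC' r) ∧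
      (g 0 ∘ₗ f 0 - LinearMap.id = dC 0 ∘ₗ h 0) ∧
      (∀ r, g (r + 1) ∘ₗ f (r + 1) - LinearMap.id
        = dC (r + 1) ∘ₗ h (r + 1) + h r ∘ₗ dC r) ∧
      (f 0 ∘ₗ g 0 - LinearMap.id = dC' 0 ∘ₗ h' 0) ∧
      (∀ r, f (r + 1) ∘ₗ g (r + 1) - LinearMap.id
        = dC' (r + 1) ∘ₗ h' (r + 1) + h' r ∘ₗ dC' r))
    -- … with f ∘ φ_s ∘ f* = φ'_s
    (hcompat : ∀ s r m, m + r = n + s →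
      f r ∘ₗ φ s r m ∘ₗ dualMap (f m) = φ' s r m) :
    -- Conclusion (1): the relative symmetric-pair equations hold:
    -- (f,1) ∘ (φ ⊕ -φ')_s ∘ (f,1)* = 0 …
    (∀ s r m : ℕ, m + r = n + s →
      LinearMap.coprod (f r) LinearMap.id ∘ₗ sumPhi C C' φ φ' s r m ∘ₗ
          dualMap (LinearMap.coprod (f m) LinearMap.id) = 0) ∧
    -- … and φ ⊕ -φ' satisfies the symmetric-structure equations on C ⊕ C'
    (∀ r m : ℕ, m + r + 1 = n →
      LinearMap.prodMap (dC r) (dC' r) ∘ₗ sumPhi C C' φ φ' 0 (r + 1) m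
        + ((-1 : ℤ) ^ r) • (sumPhi C C' φ φ' 0 r (m + 1) ∘ₗ
            dualMap (LinearMap.prodMap (dC m) (dC' m))) = 0) ∧
    (∀ s r m : ℕ, m + r = n + s →
      evMap A (C r × C' r) ∘ₗ
          (LinearMap.prodMap (dC r) (dC' r) ∘ₗ sumPhi C C' φ φ' (s + 1) (r + 1) m
            + ((-1 : ℤ) ^ r) • (sumPhi C C' φ φ' (s + 1) r (m + 1) ∘ₗ
                dualMap (LinearMap.prodMap (dC m) (dC' m)))
            + ((-1 : ℤ) ^ (n + s)) • sumPhi C C' φ φ' s r m)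
        + (((-1 : ℤ) ^ (n + s) * (-1 : ℤ) ^ (s + 1) * (-1 : ℤ) ^ (r * m)) •
            (dualMap (sumPhi C C' φ φ' s m r) :
              Dual A (C m × C' m) →ₗ[A] Dual A (Dual A (C r × C' r)))) = 0) ∧
    -- Conclusion (2): (0, (f,1)∘(φ₀⊕-φ'₀)) is a chain map 𝒞^{n+1-*} → C'_* …
    (∀ rc rt : ℕ, rc + rt = n →
      dC' rt ∘ₗ Phi C C' f φ φ' rc (rt + 1)
        + ((-1 : ℤ) ^ rt) • (Phi C C' f φ φ' (rc + 1) rt ∘ₗ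
            dualMap (dCone C C' dC dC' f rc)) = 0) ∧
    -- … which induces isomorphisms H^r(𝒞((f,1))) ≅ H_{n+1-r}(C'):
    -- injectivity on cohomology (cone degrees rc ≥ 1) …
    (∀ rc rt : ℕ, rc + 1 + rt = n + 1 →
      ∀ ξ : Dual A (Cone C C' (rc + 1)),
        dualMap (dCone C C' dC dC' f (rc + 1)) ξ = 0 →
        (∃ z, dC' rt z = Phi C C' f φ φ' (rc + 1) rt ξ) →
        ∃ η, dualMap (dCone C C' dC dC' f rc) η = ξ) ∧
    -- … and in cone degree 0 …
    (∀ ξ : Dual A (Cone C C' 0),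
      dualMap (dCone C C' dC dC' f 0) ξ = 0 →
      (∃ z, dC' (n + 1) z = Phi C C' f φ φ' 0 (n + 1) ξ) → ξ = 0) ∧
    -- … surjectivity onto homology (target degrees rt ≥ 1) …
    (∀ rc rt : ℕ, rc + (rt + 1) = n + 1 →
      ∀ y : C' (rt + 1), dC' rt y = 0 →
        ∃ ξ : Dual A (Cone C C' rc),
          dualMap (dCone C C' dC dC' f rc) ξ = 0 ∧
          ∃ z, dC' (rt + 1) z = Phi C C' f φ φ' rc (rt + 1) ξ - y) ∧
    -- … and in target degree 0
    (∀ y : C' 0,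
      ∃ ξ : Dual A (Cone C C' (n + 1)),
        dualMap (dCone C C' dC dC' f (n + 1)) ξ = 0 ∧
        ∃ z, dC' 0 z = Phi C C' f φ φ' (n + 1) 0 ξ - y) :=
  stmt_11_general A n C C' hbd hbd' dC dC' φ φ' hφ0 hφ0' hφS hφS' hP f hf hfe hcompat
end

section
/- Let A be a ring with involution and g₁, g_q, l_a, l_b ∈ A units with ḡ₁ = g₁⁻¹, ḡ_q = g_q⁻¹, l̄_a = l_a⁻¹, l̄_b = l_b⁻¹, g_q = l_a⁻¹ g₁ l_a and g₁ = l_b⁻¹ g_q l_b. Let E be the chain complex E₂ = A² → E₁ = A⁴ → E₀ = A² with ∂₂ the 2×4 matrix with rows (−1, g₁−1, 0, −l_b⁻¹) and (−l_a⁻¹, 0, g_q−1, −1) and ∂₁ the 4×2 matrix with rows (g₁−1, 0), (1, l_b⁻¹), (l_a⁻¹, 1), (0, g_q−1), matrices acting by right multiplication on row vectors. Then E is a chain complex (the composite of the differentials is 0), and the maps φ₀: E^{2−r} → E_r given by the matrices φ₀: E⁰→E₂ = ((−1, l_a),(0, 0)), φ₀: E¹→E₁ = ((0, g₁, −l_a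 g_q, 0),(0,0,0,l_b⁻¹),(0,0,0,−1),(0,0,0,0)), φ₀: E²→E₀ = ((0, g₁ l_b⁻¹),(0, −g_q)) satisfy ∂φ₀ + (−1)^r φ₀ δ = 0 in all degrees (the s = 0 equation of a 2-dimensional symmetric structure); these are the degree-0 duality maps of the union symmetric structure 0 ∪_{φ⊕−φ} 0 obtained by gluing the two cylinder null-cobordisms of C(g₁) ⊕ C(g_q). -/
open scoped Matrix

/-- The differential `∂₂ : E₂ → E₁` of the chain complex of the torus split into
two annuli (a 2×4 matrix acting by right multiplication on row vectors). -/
def stmt12.d2 (A : Type*) [Ring A] (g1 gq la lb : Aˣ) : Matrix (Fin 2) (Fin 4) A :=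
  !![-1, (g1 : A) - 1, 0, -((lb⁻¹ : Aˣ) : A);
     -((la⁻¹ : Aˣ) : A), 0, (gq : A) - 1, -1]

/-- The differential `∂₁ : E₁ → E₀` (a 4×2 matrix acting by right multiplication
on row vectors). -/
def stmt12.d1 (A : Type*) [Ring A] (g1 gq la lb : Aˣ) : Matrix (Fin 4) (Fin 2) A :=
  !![(g1 : A) - 1, 0;
     1, ((lb⁻¹ : Aˣ) : A);
     ((la⁻¹ : Aˣ) : A), 1;
     0, (gq : A) - 1]

/-- The duality map `φ₀ : E⁰ → E₂`. -/
def stmt12.phi2 (A : Type*) [Ring A] (g1 gq la lb : Aˣ) : Matrix (Fin 2) (Fin 2) A :=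
  !![-1, (la : A); 0, 0]

/-- The duality map `φ₀ : E¹ → E₁`. -/
def stmt12.phi1 (A : Type*) [Ring A] (g1 gq la lb : Aˣ) : Matrix (Fin 4) (Fin 4) A :=
  !![0, (g1 : A), -((la : A) * (gq : A)), 0;
     0, 0, 0, ((lb⁻¹ : Aˣ) : A);
     0, 0, 0, -1;
     0, 0, 0, 0]

/-- The duality map `φ₀ : E² → E₀`. -/
def stmt12.phi0 (A : Type*) [Ring A] (g1 gq la lb : Aˣ) : Matrix (Fin 2) (Fin 2) A :=
  !![0, (g1 : A) * ((lb⁻¹ : Aˣ) : A); 0, -(gq : A)]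

set_option maxHeartbeats 1000000 in
/-- Let `A` be a ring with involution and `g₁, g_q, l_a, l_b`
units with `star g₁ = g₁⁻¹`, etc., `g_q = l_a⁻¹g₁l_a`, `g₁ = l_b⁻¹g_ql_b`.
Let `E` be `E₂ = A² → E₁ = A⁴ → E₀ = A²` with the differentials `∂₂`, `∂₁`
above, all matrices acting by right multiplication on row vectors, so that
composition of maps is matrix multiplication and the coboundary `δ` is right
multiplication by the conjugate transpose of the matrix of `∂`.  Then `E` is a
chain complex, and the maps `φ₀ : E^{2-r} → E_r` above satisfy
`∂φ₀ + (-1)^r φ₀ δ = 0` in all degrees (the `s = 0` equations of a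
2-dimensional symmetric structure), i.e. `φ₀^{(1)} ∂₁ + (∂₂)ᴴ φ₀^{(0)} = 0`
and `φ₀^{(2)} ∂₂ - (∂₁)ᴴ φ₀^{(1)} = 0`; these are the degree-0 duality maps of
the union symmetric structure `0 ∪_{φ⊕-φ} 0` obtained by gluing the two
cylinder null-cobordisms of `C(g₁) ⊕ C(g_q)`. -/
theorem stmt_12 (A : Type*) [Ring A] [StarRing A] (g1 gq la lb : Aˣ)
    (hg1 : star (g1 : A) = ((g1⁻¹ : Aˣ) : A))
    (hgq : star (gq : A) = ((gq⁻¹ : Aˣ) : A))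
    (hla : star (la : A) = ((la⁻¹ : Aˣ) : A))
    (hlb : star (lb : A) = ((lb⁻¹ : Aˣ) : A))
    (ha : (gq : A) = ((la⁻¹ : Aˣ) : A) * (g1 : A) * (la : A))
    (hb : (g1 : A) = ((lb⁻¹ : Aˣ) : A) * (gq : A) * (lb : A)) :
    -- E is a chain complex
    stmt12.d2 A g1 gq la lb * stmt12.d1 A g1 gq la lb = 0 ∧
    -- ∂ φ₀ + (-1)^0 φ₀ δ = 0 : E¹ → E₀
    stmt12.phi1 A g1 gq la lb * stmt12.d1 A g1 gq la lb
      + (stmt12.d2 A g1 gq la lb)ᴴ * stmt12.phi0 A g1 gq la lb = 0 ∧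
    -- ∂ φ₀ + (-1)^1 φ₀ δ = 0 : E⁰ → E₁
    stmt12.phi2 A g1 gq la lb * stmt12.d2 A g1 gq la lb
      - (stmt12.d1 A g1 gq la lb)ᴴ * stmt12.phi1 A g1 gq la lb = 0 := by
  have hla' : star ((la⁻¹ : Aˣ) : A) = (la : A) := by rw [← hla, star_star]
  have hlb' : star ((lb⁻¹ : Aˣ) : A) = (lb : A) := by rw [← hlb, star_star]
  have h1 : (g1 : A) * ((lb⁻¹ : Aˣ) : A) = ((lb⁻¹ : Aˣ) : A) * (gq : A) := by
    simp [hb, mul_assoc]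
  have h2 : (gq : A) * ((la⁻¹ : Aˣ) : A) = ((la⁻¹ : Aˣ) : A) * (g1 : A) := by
    simp [ha, mul_assoc]
  have h3 : (la : A) * (gq : A) = (g1 : A) * (la : A) := by
    simp [ha, mul_assoc]
  have h4 : (lb : A) * (g1 : A) = (gq : A) * (lb : A) := by
    simp [hb, mul_assoc]
  have h1' : ∀ x : A, (g1 : A) * (((lb⁻¹ : Aˣ) : A) * x)
      = ((lb⁻¹ : Aˣ) : A) * ((gq : A) * x) := fun x => by
    rw [← mul_assoc, h1, mul_assoc]
  have h2' : ∀ x : A, (gq : A) * (((la⁻¹ : Aˣ) : A) * x)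
      = ((la⁻¹ : Aˣ) : A) * ((g1 : A) * x) := fun x => by
    rw [← mul_assoc, h2, mul_assoc]
  have h3' : ∀ x : A, (la : A) * ((gq : A) * x) = (g1 : A) * ((la : A) * x) := fun x => by
    rw [← mul_assoc, h3, mul_assoc]
  have h4' : ∀ x : A, (lb : A) * ((g1 : A) * x) = (gq : A) * ((lb : A) * x) := fun x => by
    rw [← mul_assoc, h4, mul_assoc]
  have h5 : ((g1⁻¹ : Aˣ) : A) * (((lb⁻¹ : Aˣ) : A) * (gq : A)) = ((lb⁻¹ : Aˣ) : A) := by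
    rw [← h1, ← mul_assoc]; simp
  have h6 : ((gq⁻¹ : Aˣ) : A) * (((la⁻¹ : Aˣ) : A) * (g1 : A)) = ((la⁻¹ : Aˣ) : A) := by
    rw [← h2, ← mul_assoc]; simp
  refine ⟨?_, ?_, ?_⟩ <;>
  · ext i j
    fin_cases i <;> fin_cases j <;>
      (try simp [stmt12.d1, stmt12.d2, stmt12.phi0, stmt12.phi1, stmt12.phi2,
        Matrix.mul_apply, Fin.sum_univ_succ, Matrix.conjTranspose_apply,
        hg1, hgq, hla, hlb, hla', hlb', h1, h2, h3, h4, h5, h6, h1', h2', h3', h4',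
        sub_mul, mul_sub, mul_assoc]) <;> (try abel) <;>
      simp [Matrix.vecHead, Matrix.vecTail]
end

section
/- Let A be a ring with involution and g₁, g_q, l_a, l_b ∈ A units with ḡ₁ = g₁⁻¹, ḡ_q = g_q⁻¹, l̄_a = l_a⁻¹, l̄_b = l_b⁻¹, g_q = l_a⁻¹ g₁ l_a and g₁ = l_b⁻¹ g_q l_b (so g₁ commutes with l_a l_b). Let E and its duality maps φ₀ be as in the union construction for the split torus, let E' be the chain complex E'₂ = A → E'₁ = A² → E'₀ = A with ∂₂ = (l_a l_b − 1, 1 − g₁) and ∂₁ the column (g₁ − 1, l_a l_b − 1), and let η: E → E' be given by η₂ = column (−l_b⁻¹l_a⁻¹, 0), η₁ = the 4×2 matrix with rows (1, 0), (0, l_b⁻¹l_a⁻¹), (0, 0), (−l_a⁻¹, 0), η₀ = column (1, −l_a⁻¹). Then the push-forward η ∘ φ₀ ∘ η*: E'^{2−r} → E'_r equals φ'₀ given by: φ'₀ = l_b⁻¹l_a⁻¹: E'⁰ → E'₂, φ'₀ = ((0, g₁ l_b⁻¹ l_a⁻¹),(−1, 0)): E'¹ → E'₁, and φ'₀ = g₁: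 E'² → E'₀ (all acting by right multiplication). -/
open scoped Matrix

namespace stmt13

variable (A : Type*) [Ring A]

/-- `∂₂` of the split torus complex `E` (right multiplication on row vectors). -/
def d2 (g1 gq la lb : Aˣ) : Matrix (Fin 2) (Fin 4) A :=
  !![-1, (g1 : A) - 1, 0, -((lb⁻¹ : Aˣ) : A);
     -((la⁻¹ : Aˣ) : A), 0, (gq : A) - 1, -1]

/-- `∂₁` of the split torus complex `E`. -/
def d1 (g1 gq la lb : Aˣ) : Matrix (Fin 4) (Fin 2) A :=
  !![(g1 : A) - 1, 0;
     1, ((lb⁻¹ : Aˣ) : A);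
     ((la⁻¹ : Aˣ) : A), 1;
     0, (gq : A) - 1]

/-- Duality map `φ₀ : E⁰ → E₂`. -/
def phi2 (g1 la : Aˣ) : Matrix (Fin 2) (Fin 2) A := !![-1, (la : A); 0, 0]

/-- Duality map `φ₀ : E¹ → E₁`. -/
def phi1 (g1 gq la lb : Aˣ) : Matrix (Fin 4) (Fin 4) A :=
  !![0, (g1 : A), -((la : A) * (gq : A)), 0;
     0, 0, 0, ((lb⁻¹ : Aˣ) : A);
     0, 0, 0, -1;
     0, 0, 0, 0]

/-- Duality map `φ₀ : E² → E₀`. -/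
def phi0 (g1 gq lb : Aˣ) : Matrix (Fin 2) (Fin 2) A :=
  !![0, (g1 : A) * ((lb⁻¹ : Aˣ) : A); 0, -(gq : A)]

/-- `η₂ : E₂ → E'₂`, component of the chain equivalence from the split torus
complex to the standard torus complex. -/
def eta2 (la lb : Aˣ) : Matrix (Fin 2) (Fin 1) A :=
  !![-(((lb⁻¹ : Aˣ) : A) * ((la⁻¹ : Aˣ) : A)); 0]

/-- `η₁ : E₁ → E'₁`. -/
def eta1 (la lb : Aˣ) : Matrix (Fin 4) (Fin 2) A :=
  !![1, 0;
     0, ((lb⁻¹ : Aˣ) : A) * ((la⁻¹ : Aˣ) : A);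
     0, 0;
     -((la⁻¹ : Aˣ) : A), 0]

/-- `η₀ : E₀ → E'₀`. -/
def eta0 (la : Aˣ) : Matrix (Fin 2) (Fin 1) A := !![1; -((la⁻¹ : Aˣ) : A)]

end stmt13

/-- Let `A` be a ring with involution and `g₁, g_q, l_a, l_b`
units with `star g₁ = g₁⁻¹` etc., `g_q = l_a⁻¹g₁l_a`, `g₁ = l_b⁻¹g_ql_b`
(so `g₁` commutes with `l_al_b`).  Let `E` with duality maps `φ₀` be as in the
union construction for the split torus, let `E'` be
`E'₂ = A → E'₁ = A² → E'₀ = A` with `∂₂ = (l_al_b - 1, 1 - g₁)` and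
`∂₁ = (g₁-1; l_al_b-1)`, and let `η : E → E'` be given by the matrices above
(everything acting by right multiplication on row vectors, so that composition
is matrix multiplication, and duals `η*` given by conjugate transpose
matrices).  Then the push-forward `η ∘ φ₀ ∘ η* : E'^{2-r} → E'_r`, whose matrix
in degree `r` is `(η_{2-r})ᴴ ⬝ φ₀^{(r)} ⬝ η_r`, equals `φ'₀` given by
`φ'₀ = l_b⁻¹l_a⁻¹ : E'⁰ → E'₂`, `φ'₀ = ((0, g₁l_b⁻¹l_a⁻¹), (-1, 0)) : E'¹ → E'₁`
and `φ'₀ = g₁ : E'² → E'₀`. -/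
theorem stmt_13 (A : Type*) [Ring A] [StarRing A] (g1 gq la lb : Aˣ)
    (hg1 : star (g1 : A) = ((g1⁻¹ : Aˣ) : A))
    (hgq : star (gq : A) = ((gq⁻¹ : Aˣ) : A))
    (hla : star (la : A) = ((la⁻¹ : Aˣ) : A))
    (hlb : star (lb : A) = ((lb⁻¹ : Aˣ) : A))
    (ha : (gq : A) = ((la⁻¹ : Aˣ) : A) * (g1 : A) * (la : A))
    (hb : (g1 : A) = ((lb⁻¹ : Aˣ) : A) * (gq : A) * (lb : A)) :
    -- degree r = 2 : E'⁰ → E'₂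
    (stmt13.eta0 A la)ᴴ * stmt13.phi2 A g1 la * stmt13.eta2 A la lb
      = !![((lb⁻¹ : Aˣ) : A) * ((la⁻¹ : Aˣ) : A)] ∧
    -- degree r = 1 : E'¹ → E'₁
    (stmt13.eta1 A la lb)ᴴ * stmt13.phi1 A g1 gq la lb * stmt13.eta1 A la lb
      = !![0, (g1 : A) * ((lb⁻¹ : Aˣ) : A) * ((la⁻¹ : Aˣ) : A); -1, 0] ∧
    -- degree r = 0 : E'² → E'₀
    (stmt13.eta2 A la lb)ᴴ * stmt13.phi0 A g1 gq lb * stmt13.eta0 A la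
      = !![(g1 : A)] := by

  have hla' : star ((la⁻¹ : Aˣ) : A) = (la : A) := by
    have := congrArg star hla; simpa using this.symm
  have hlb' : star ((lb⁻¹ : Aˣ) : A) = (lb : A) := by
    have := congrArg star hlb; simpa using this.symm
  have hg1' : star ((g1⁻¹ : Aˣ) : A) = (g1 : A) := by
    have := congrArg star hg1; simpa using this.symm
  have key : (la : A) * ((lb : A) * ((g1 : A) * (((lb⁻¹ : Aˣ) : A) * ((la⁻¹ : Aˣ) : A)))) = (g1 : A) := by
    conv_lhs => rw [hb, ha]
    simp [mul_assoc]
  refine ⟨?_, ?_, ?_⟩ <;>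
    · ext i j
      fin_cases i <;> fin_cases j <;>
        simp [stmt13.eta0, stmt13.eta1, stmt13.eta2, stmt13.phi0, stmt13.phi1,
          stmt13.phi2, Matrix.mul_apply, Matrix.conjTranspose_apply,
          Fin.sum_univ_succ, hla, hlb, hg1, hgq, hla', hlb', hg1', mul_assoc, key]
end

section
/- Let A be a ring with involution and g₁, l ∈ A units with ḡ₁ = g₁⁻¹, l̄ = l⁻¹ and g₁ l = l g₁ (in the knot case l = l_a l_b). Let E' be the chain complex E'₂ = A → E'₁ = A² → E'₀ = A with ∂₂ = (l − 1, 1 − g₁) and ∂₁ the column (g₁ − 1, l − 1) (right multiplication on row vectors). Then the maps φ'₀ given by φ'₀ = l⁻¹: E'⁰ → E'₂, φ'₀ = ((0, g₁ l⁻¹),(−1, 0)): E'¹ → E'₁, φ'₀ = g₁: E'² → E'₀ satisfy ∂φ'₀ + (−1)^r φ'₀ δ = 0 in all degrees, and each component of φ'₀ is invertible, so φ'₀: E'^{2−*} → E'_* is an isomorphism of chain complexes; in particular the duality maps of the symmetric structure on the chain complex of the torus are a chain equivalence (chain-level Poincaré duality for the torus). -/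
open scoped Matrix

namespace stmt14

variable (A : Type*) [Ring A]

/-- `∂₂ : E'₂ → E'₁` of the standard torus complex (right multiplication on
row vectors). -/
def d2 (g1 l : Aˣ) : Matrix (Fin 1) (Fin 2) A := !![(l : A) - 1, 1 - (g1 : A)]

/-- `∂₁ : E'₁ → E'₀`. -/
def d1 (g1 l : Aˣ) : Matrix (Fin 2) (Fin 1) A := !![(g1 : A) - 1; (l : A) - 1]

/-- `φ'₀ : E'⁰ → E'₂`. -/
def phi2 (l : Aˣ) : Matrix (Fin 1) (Fin 1) A := !![((l⁻¹ : Aˣ) : A)]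

/-- `φ'₀ : E'¹ → E'₁`. -/
def phi1 (g1 l : Aˣ) : Matrix (Fin 2) (Fin 2) A :=
  !![0, (g1 : A) * ((l⁻¹ : Aˣ) : A); -1, 0]

/-- `φ'₀ : E'² → E'₀`. -/
def phi0 (g1 : Aˣ) : Matrix (Fin 1) (Fin 1) A := !![(g1 : A)]

end stmt14

private lemma bij_of_unit {n : Type*} [Fintype n] [DecidableEq n] {A : Type*} [Ring A]
    {M : Matrix n n A} (h : IsUnit M) :
    Function.Bijective (fun v : n → A => v ᵥ* M) := by
  obtain ⟨u, rfl⟩ := h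
  refine Function.bijective_iff_has_inverse.2 ⟨fun v => v ᵥ* (u⁻¹).val, ?_, ?_⟩ <;>
      intro v <;> dsimp only
  · rw [Matrix.vecMul_vecMul, Units.mul_inv, Matrix.vecMul_one]
  · rw [Matrix.vecMul_vecMul, Units.inv_mul, Matrix.vecMul_one]

/-- Let `A` be a ring with involution and `g₁, l` units with
`star g₁ = g₁⁻¹`, `star l = l⁻¹` and `g₁ l = l g₁` (in the knot case
`l = l_a l_b`).  Let `E'` be the chain complex `E'₂ = A → E'₁ = A² → E'₀ = A`
with `∂₂ = (l-1, 1-g₁)`, `∂₁ = (g₁-1; l-1)` (right multiplication on row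
vectors, the coboundary `δ` being right multiplication by the conjugate
transpose matrix of `∂`).  Then the maps `φ'₀` given by `φ'₀ = l⁻¹ : E'⁰ → E'₂`,
`φ'₀ = ((0, g₁l⁻¹),(-1,0)) : E'¹ → E'₁`, `φ'₀ = g₁ : E'² → E'₀` satisfy
`∂φ'₀ + (-1)^r φ'₀ δ = 0` in all degrees, and each component of `φ'₀` is
invertible, so `φ'₀ : E'^{2-*} → E'_*` is an isomorphism of chain complexes:
chain-level Poincaré duality for the torus. -/
theorem stmt_14 (A : Type*) [Ring A] [StarRing A] (g1 l : Aˣ)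
    (hg1 : star (g1 : A) = ((g1⁻¹ : Aˣ) : A))
    (hl : star (l : A) = ((l⁻¹ : Aˣ) : A))
    (hcomm : (g1 : A) * (l : A) = (l : A) * (g1 : A)) :
    -- ∂φ'₀ + (-1)^0 φ'₀ δ = 0 : E'¹ → E'₀
    stmt14.phi1 A g1 l * stmt14.d1 A g1 l
      + (stmt14.d2 A g1 l)ᴴ * stmt14.phi0 A g1 = 0 ∧
    -- ∂φ'₀ + (-1)^1 φ'₀ δ = 0 : E'⁰ → E'₁
    stmt14.phi2 A l * stmt14.d2 A g1 l
      - (stmt14.d1 A g1 l)ᴴ * stmt14.phi1 A g1 l = 0 ∧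
    -- each component of φ'₀ is invertible …
    IsUnit (stmt14.phi2 A l) ∧ IsUnit (stmt14.phi1 A g1 l) ∧ IsUnit (stmt14.phi0 A g1) ∧
    -- … so φ'₀ is an isomorphism of chain complexes (it is also a chain map,
    -- which is the content of the first two equations).
    Function.Bijective (fun v : Fin 1 → A => v ᵥ* stmt14.phi2 A l) ∧
    Function.Bijective (fun v : Fin 2 → A => v ᵥ* stmt14.phi1 A g1 l) ∧
    Function.Bijective (fun v : Fin 1 → A => v ᵥ* stmt14.phi0 A g1) := by
  -- commutation of g1 with l⁻¹ etc.
  have hcu : g1 * l = l * g1 := Units.ext hcomm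
  have hc : Commute g1 l := hcu
  have h1 : (g1 : A) * ((l⁻¹ : Aˣ) : A) = ((l⁻¹ : Aˣ) : A) * (g1 : A) := by
    exact_mod_cast congrArg Units.val hc.inv_right
  have h2 : ((g1⁻¹ : Aˣ) : A) * (l : A) = (l : A) * ((g1⁻¹ : Aˣ) : A) := by
    exact_mod_cast congrArg Units.val hc.inv_left
  have e1 : stmt14.phi1 A g1 l * stmt14.d1 A g1 l
      + (stmt14.d2 A g1 l)ᴴ * stmt14.phi0 A g1 = 0 := by
    ext i j
    fin_cases i <;> fin_cases j <;>
      simp [stmt14.phi1, stmt14.d1, stmt14.d2, stmt14.phi0, Matrix.mul_apply,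
        Fin.sum_univ_succ, hg1, hl, mul_sub, sub_mul] <;>
      noncomm_ring [h1, h2]
  have e2 : stmt14.phi2 A l * stmt14.d2 A g1 l
      - (stmt14.d1 A g1 l)ᴴ * stmt14.phi1 A g1 l = 0 := by
    ext i j
    fin_cases i <;> fin_cases j <;>
      simp [stmt14.phi1, stmt14.d1, stmt14.d2, stmt14.phi2, Matrix.mul_apply,
        Fin.sum_univ_succ, hg1, hl, mul_sub, sub_mul] <;>
      noncomm_ring [h1, h2]
  have u2 : IsUnit (stmt14.phi2 A l) := by
    have hA : stmt14.phi2 A l * !![(l : A)] = 1 := by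
      ext i j; fin_cases i; fin_cases j; simp [stmt14.phi2, Matrix.mul_apply]
    have hB : !![(l : A)] * stmt14.phi2 A l = 1 := by
      ext i j; fin_cases i; fin_cases j; simp [stmt14.phi2, Matrix.mul_apply]
    exact ⟨⟨_, _, hA, hB⟩, rfl⟩
  have u0 : IsUnit (stmt14.phi0 A g1) := by
    have hA : stmt14.phi0 A g1 * !![((g1⁻¹ : Aˣ) : A)] = 1 := by
      ext i j; fin_cases i; fin_cases j; simp [stmt14.phi0, Matrix.mul_apply]
    have hB : !![((g1⁻¹ : Aˣ) : A)] * stmt14.phi0 A g1 = 1 := by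
      ext i j; fin_cases i; fin_cases j; simp [stmt14.phi0, Matrix.mul_apply]
    exact ⟨⟨_, _, hA, hB⟩, rfl⟩
  have u1 : IsUnit (stmt14.phi1 A g1 l) := by
    have : stmt14.phi1 A g1 l * !![0, -1; (l : A) * ((g1⁻¹ : Aˣ) : A), 0] = 1 ∧
        !![0, -1; (l : A) * ((g1⁻¹ : Aˣ) : A), 0] * stmt14.phi1 A g1 l = 1 := by
      constructor <;> (ext i j; fin_cases i <;> fin_cases j <;>
        simp [stmt14.phi1, Matrix.mul_apply, Fin.sum_univ_succ])
      · calc (g1 : A) * ((l⁻¹ : Aˣ) : A) * ((l : A) * ((g1⁻¹ : Aˣ) : A))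
            = (g1 : A) * (((l⁻¹ : Aˣ) : A) * (l : A)) * ((g1⁻¹ : Aˣ) : A) := by
              noncomm_ring
          _ = 1 := by simp [← Units.val_mul]
      · calc (l : A) * ((g1⁻¹ : Aˣ) : A) * ((g1 : A) * ((l⁻¹ : Aˣ) : A))
            = (l : A) * (((g1⁻¹ : Aˣ) : A) * (g1 : A)) * ((l⁻¹ : Aˣ) : A) := by
              noncomm_ring
          _ = 1 := by simp [← Units.val_mul]
    exact ⟨⟨_, _, this.1, this.2⟩, rfl⟩
  exact ⟨e1, e2, u2, u1, u0, bij_of_unit u2, bij_of_unit u1, bij_of_unit u0⟩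
end

section
/- Let A be a ring with involution and g₁, g_q, l_a, l_b ∈ A units with g_q = l_a⁻¹ g₁ l_a and g₁ = l_b⁻¹ g_q l_b. Let E be the chain complex E₂ = A² → E₁ = A⁴ → E₀ = A² with ∂₂ having rows (−1, g₁−1, 0, −l_b⁻¹) and (−l_a⁻¹, 0, g_q−1, −1) and ∂₁ having rows (g₁−1, 0), (1, l_b⁻¹), (l_a⁻¹, 1), (0, g_q−1), and let E' be the chain complex E'₂ = A → E'₁ = A² → E'₀ = A with ∂₂ = (l_a l_b − 1, 1 − g₁) and ∂₁ the column (g₁ − 1, l_a l_b − 1) (all matrices acting by right multiplication on row vectors). Then the maps η₂ = column (−l_b⁻¹l_a⁻¹, 0): A² → A, η₁ = the 4×2 matrix with rows (1, 0), (0, l_b⁻¹l_a⁻¹), (0, 0), (−l_a⁻¹, 0): A⁴ → A², η₀ = column (1, −l_a⁻¹): A² → A form a chain map η: E → E', and η is a chain homotopy equivalence. -/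
/-!
The relations say that `l_a` conjugates `g_q` into `g₁` and `l_b` conjugates `g₁` into `g_q`;
hence `g₁` commutes with `l_a l_b` and with its inverse `l_b⁻¹ l_a⁻¹`, and these
semiconjugations are all that the chain-map identities for `η` and its homotopy inverse `ξ` need.
The map `ξ : E' → E` is even a strict section of `η` (`ξ * η = 1` as matrices), so the
homotopy on `E'` is zero, and on `E` a homotopy with one nonzero entry in each degree suffices.
-/

open scoped Matrix

namespace stmt15

variable (A : Type*) [Ring A]

/-- `∂₂ : E₂ → E₁` of the chain complex `E` of the torus split into two annuli
(matrices act by right multiplication on row vectors). -/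
def d2E (g1 gq la lb : Aˣ) : Matrix (Fin 2) (Fin 4) A :=
  !![-1, (g1 : A) - 1, 0, -((lb⁻¹ : Aˣ) : A);
     -((la⁻¹ : Aˣ) : A), 0, (gq : A) - 1, -1]

/-- `∂₁ : E₁ → E₀`. -/
def d1E (g1 gq la lb : Aˣ) : Matrix (Fin 4) (Fin 2) A :=
  !![(g1 : A) - 1, 0;
     1, ((lb⁻¹ : Aˣ) : A);
     ((la⁻¹ : Aˣ) : A), 1;
     0, (gq : A) - 1]

/-- `∂₂ : E'₂ → E'₁` of the standard torus complex `E'`. -/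
def d2E' (g1 la lb : Aˣ) : Matrix (Fin 1) (Fin 2) A :=
  !![(la : A) * (lb : A) - 1, 1 - (g1 : A)]

/-- `∂₁ : E'₁ → E'₀`. -/
def d1E' (g1 la lb : Aˣ) : Matrix (Fin 2) (Fin 1) A :=
  !![(g1 : A) - 1; (la : A) * (lb : A) - 1]

/-- `η₂ : E₂ → E'₂`. -/
def eta2 (la lb : Aˣ) : Matrix (Fin 2) (Fin 1) A :=
  !![-(((lb⁻¹ : Aˣ) : A) * ((la⁻¹ : Aˣ) : A)); 0]

/-- `η₁ : E₁ → E'₁`. -/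
def eta1 (la lb : Aˣ) : Matrix (Fin 4) (Fin 2) A :=
  !![1, 0;
     0, ((lb⁻¹ : Aˣ) : A) * ((la⁻¹ : Aˣ) : A);
     0, 0;
     -((la⁻¹ : Aˣ) : A), 0]

/-- `η₀ : E₀ → E'₀`. -/
def eta0 (la : Aˣ) : Matrix (Fin 2) (Fin 1) A := !![1; -((la⁻¹ : Aˣ) : A)]

end stmt15

theorem Units.semiconjBy_of_eq_inv_mul_mul {M : Type*} [Monoid M] {u : Mˣ} {x y : M}
    (h : y = ↑u⁻¹ * x * ↑u) : SemiconjBy (↑u) y x :=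
  (Units.eq_inv_mul_iff_mul_eq u).mp (by rw [h, mul_assoc])

namespace stmt15

variable (A : Type*) [Ring A]

def xi2 (la lb : Aˣ) : Matrix (Fin 1) (Fin 2) A := !![-((la : A) * (lb : A)), (la : A)]

def xi1 (la lb : Aˣ) : Matrix (Fin 2) (Fin 4) A :=
  !![1, 0, 0, 0;
     0, (la : A) * (lb : A), -(la : A), 0]

def xi0 : Matrix (Fin 1) (Fin 2) A := !![1, 0]

def s0 : Matrix (Fin 2) (Fin 4) A :=
  !![0, 0, 0, 0;
     0, 0, -1, 0]

def s1 : Matrix (Fin 4) (Fin 2) A :=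
  !![0, 0;
     0, 0;
     0, 0;
     0, 1]

variable {A} {g1 gq la lb : Aˣ}

theorem d2E_mul_eta1 (h : Commute (((lb⁻¹ : Aˣ) : A) * ((la⁻¹ : Aˣ) : A)) g1) :
    d2E A g1 gq la lb * eta1 A la lb = eta2 A la lb * d2E' A g1 la lb := by
  simp [d2E, eta1, eta2, d2E', Matrix.cons_mul, Matrix.vecMul_cons, mul_sub, sub_mul,
    ← mul_assoc, h.eq]
  abel

theorem d1E_mul_eta0 (h : SemiconjBy ((la⁻¹ : Aˣ) : A) g1 gq) :
    d1E A g1 gq la lb * eta0 A la = eta1 A la lb * d1E' A g1 la lb := by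
  simp [d1E, eta1, eta0, d1E', Matrix.cons_mul, Matrix.vecMul_cons, mul_sub, sub_mul,
    ← mul_assoc, h.eq]
  abel

theorem d2E'_mul_xi1 (h : SemiconjBy (la : A) gq g1) (hc : Commute ((la : A) * lb) g1) :
    d2E' A g1 la lb * xi1 A la lb = xi2 A la lb * d2E A g1 gq la lb := by
  simp [d2E', d2E, xi1, xi2, Matrix.cons_mul, Matrix.vecMul_cons, mul_sub, sub_mul,
    ← mul_assoc, h.eq, hc.eq]
  abel

theorem d1E'_mul_xi0 : d1E' A g1 la lb * xi0 A = xi1 A la lb * d1E A g1 gq la lb := by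
  simp [d1E', d1E, xi1, xi0, Matrix.cons_mul, Matrix.vecMul_cons, sub_eq_add_neg]

theorem eta0_mul_xi0_sub_one : eta0 A la * xi0 A - 1 = s0 A * d1E A g1 gq la lb := by
  simp [eta0, xi0, s0, d1E, Matrix.cons_mul, Matrix.vecMul_cons, Matrix.one_fin_two]

theorem eta1_mul_xi1_sub_one :
    eta1 A la lb * xi1 A la lb - 1 = d1E A g1 gq la lb * s0 A + s1 A * d2E A g1 gq la lb := by
  ext i j
  simp only [Matrix.sub_apply, Matrix.add_apply, Matrix.mul_apply, Fin.sum_univ_two,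
    Matrix.one_apply]
  fin_cases i <;> fin_cases j <;> simp [eta1, xi1, s0, s1, d1E, d2E, ← mul_assoc]

theorem eta2_mul_xi2_sub_one : eta2 A la lb * xi2 A la lb - 1 = d2E A g1 gq la lb * s1 A := by
  simp [eta2, xi2, s1, d2E, Matrix.cons_mul, Matrix.vecMul_cons, Matrix.one_fin_two, ← mul_assoc]

theorem xi0_mul_eta0 : xi0 A * eta0 A la = 1 := by
  ext i j
  fin_cases i; fin_cases j
  simp [xi0, eta0, Matrix.mul_apply]

theorem xi1_mul_eta1 : xi1 A la lb * eta1 A la lb = 1 := by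
  simp [xi1, eta1, Matrix.cons_mul, Matrix.vecMul_cons, Matrix.one_fin_two, ← mul_assoc]

theorem xi2_mul_eta2 : xi2 A la lb * eta2 A la lb = 1 := by
  ext i j
  fin_cases i; fin_cases j
  simp [xi2, eta2, Matrix.mul_apply, ← mul_assoc]

end stmt15

/-- Let `A` be a ring and `g₁, g_q, l_a, l_b` units with
`g_q = l_a⁻¹g₁l_a` and `g₁ = l_b⁻¹g_ql_b` (e.g. `A = ℤ[π₁(X)]` for a knot
exterior `X`).  Let `E` be the chain complex `A² → A⁴ → A²` of the torus split
into two annuli and `E'` the standard torus complex `A → A² → A`, with the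
differentials above (matrices acting by right multiplication on row vectors,
so composing "first `M` then `N`" has matrix `M * N`).  Then `η = (η₂, η₁, η₀)`
is a chain map `E → E'`, and `η` is a chain homotopy equivalence: there are a
chain map `ξ : E' → E` and chain homotopies `s` (on `E`) and `t` (on `E'`)
from the two composites to the identities. -/
theorem stmt_15 (A : Type*) [Ring A] (g1 gq la lb : Aˣ)
    (ha : (gq : A) = ((la⁻¹ : Aˣ) : A) * (g1 : A) * (la : A))
    (hb : (g1 : A) = ((lb⁻¹ : Aˣ) : A) * (gq : A) * (lb : A)) :
    -- η is a chain map
    stmt15.d2E A g1 gq la lb * stmt15.eta1 A la lb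
      = stmt15.eta2 A la lb * stmt15.d2E' A g1 la lb ∧
    stmt15.d1E A g1 gq la lb * stmt15.eta0 A la
      = stmt15.eta1 A la lb * stmt15.d1E' A g1 la lb ∧
    -- η is a chain homotopy equivalence
    ∃ (xi2 : Matrix (Fin 1) (Fin 2) A) (xi1 : Matrix (Fin 2) (Fin 4) A)
      (xi0 : Matrix (Fin 1) (Fin 2) A)
      (s0 : Matrix (Fin 2) (Fin 4) A) (s1 : Matrix (Fin 4) (Fin 2) A)
      (t0 : Matrix (Fin 1) (Fin 2) A) (t1 : Matrix (Fin 2) (Fin 1) A),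
      -- ξ is a chain map E' → E
      stmt15.d2E' A g1 la lb * xi1 = xi2 * stmt15.d2E A g1 gq la lb ∧
      stmt15.d1E' A g1 la lb * xi0 = xi1 * stmt15.d1E A g1 gq la lb ∧
      -- ξ ∘ η ≃ 1 : E → E  (composite "first η then ξ" has matrix η * ξ)
      stmt15.eta0 A la * xi0 - 1 = s0 * stmt15.d1E A g1 gq la lb ∧
      stmt15.eta1 A la lb * xi1 - 1
        = stmt15.d1E A g1 gq la lb * s0 + s1 * stmt15.d2E A g1 gq la lb ∧
      stmt15.eta2 A la lb * xi2 - 1 = stmt15.d2E A g1 gq la lb * s1 ∧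
      -- η ∘ ξ ≃ 1 : E' → E'
      xi0 * stmt15.eta0 A la - 1 = t0 * stmt15.d1E' A g1 la lb ∧
      xi1 * stmt15.eta1 A la lb - 1
        = stmt15.d1E' A g1 la lb * t0 + t1 * stmt15.d2E' A g1 la lb ∧
      xi2 * stmt15.eta2 A la lb - 1 = stmt15.d2E' A g1 la lb * t1 := by
  have hsa : SemiconjBy (la : A) gq g1 := Units.semiconjBy_of_eq_inv_mul_mul ha
  have hsb : SemiconjBy (lb : A) g1 gq := Units.semiconjBy_of_eq_inv_mul_mul hb
  open stmt15 in
  refine ⟨d2E_mul_eta1 (hsb.units_inv_symm_left.mul_left hsa.units_inv_symm_left),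
    d1E_mul_eta0 hsa.units_inv_symm_left, xi2 A la lb, xi1 A la lb, xi0 A, s0 A, s1 A, 0, 0,
    d2E'_mul_xi1 hsa (hsa.mul_left hsb), d1E'_mul_xi0, eta0_mul_xi0_sub_one,
    eta1_mul_xi1_sub_one, eta2_mul_xi2_sub_one, ?_, ?_, ?_⟩ <;>
  simp [xi0_mul_eta0, xi1_mul_eta1, xi2_mul_eta2]
end
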